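/- arXiv:1701.03906 — 6 statements merged into one kernel-verified Lean document; each statement's English description precedes it below -/
import Mathlib

section
/- Let ν be a nonnegative σ-finite Borel measure on [0,∞), γ ≥ 0, and C ≥ 0. If lim_{a→∞} ν([0,a])/a^γ = C, then lim_{t→0⁺} t^γ ∫_{[0,∞)} e^{-tx} dν(x) = C · Γ(γ+1). -/
/-!
Write `G a = ν [0, a]`. Fubini turns `∫ e^{-tx} dν(x)` into `∫₀^∞ t e^{-ts} G(s) ds`, and the
substitution `u = ts` turns `t^γ` times it into `∫₀^∞ e^{-u} t^γ G(u/t) du`. As `t → 0⁺` the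
integrand tends to `C e^{-u} u^γ`, and for `t ≤ 1` it is dominated by `e^{-u} ((C+1) u^γ + G(A))`,
where `G a ≤ (C+1) a^γ` for `a ≥ A`; dominated convergence gives the limit
`C ∫₀^∞ e^{-u} u^γ du = C Γ(γ+1)`.
-/

open MeasureTheory Filter Set Real
open scoped ENNReal Topology

lemma lintegral_Ici_lintegral_Ici_eq_lintegral_mul_measure_Icc
    {μ ν : Measure ℝ} [SFinite μ] [SFinite ν] {g : ℝ → ℝ≥0∞} (hg : Measurable g) (a : ℝ) :
    ∫⁻ x in Ici a, ∫⁻ s in Ici x, g s ∂μ ∂ν = ∫⁻ s in Ici a, g s * ν (Icc a s) ∂μ := by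
  have h_inner : ∀ x ∈ Ici a, ∫⁻ s in Ici x, g s ∂μ = ∫⁻ s in Ici a, (Ici x).indicator g s ∂μ := by
    intro x hx
    rw [lintegral_indicator measurableSet_Ici, Measure.restrict_restrict measurableSet_Ici,
      inter_eq_left.2 (Ici_subset_Ici.2 hx)]
  have hmeas : Measurable (Function.uncurry fun x s => (Ici x).indicator g s) :=
    (hg.comp measurable_snd).indicator (measurableSet_le measurable_fst measurable_snd)
  rw [setLIntegral_congr_fun measurableSet_Ici h_inner, lintegral_lintegral_swap hmeas.aemeasurable]
  refine setLIntegral_congr_fun measurableSet_Ici fun s _ => ?_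
  change ∫⁻ x in Ici a, (Iic s).indicator (fun _ => g s) x ∂ν = _
  rw [lintegral_indicator measurableSet_Iic, setLIntegral_const,
    Measure.restrict_apply measurableSet_Iic, inter_comm, Ici_inter_Iic]

lemma lintegral_Ici_mul_exp_neg_mul {t : ℝ} (ht : 0 < t) (x : ℝ) :
    ∫⁻ s in Ici x, ENNReal.ofReal (t * exp (-(t * s))) = ENNReal.ofReal (exp (-(t * x))) := by
  have hint : IntegrableOn (fun s => t * exp (-(t * s))) (Ioi x) := by
    have := (exp_neg_integrableOn_Ioi x ht).const_mul t
    simp only [neg_mul] at this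
    exact this
  rw [← setLIntegral_congr Ioi_ae_eq_Ici,
    ← ofReal_integral_eq_lintegral_ofReal hint (ae_of_all _ fun s => by positivity),
    integral_const_mul, integral_comp_mul_left_Ioi (fun u => exp (-u)) x ht,
    integral_exp_neg_Ioi, smul_eq_mul, mul_inv_cancel_left₀ ht.ne']

lemma lintegral_exp_neg_mul_rpow_Ioi {γ : ℝ} (hγ : -1 < γ) :
    ∫⁻ u in Ioi (0 : ℝ), ENNReal.ofReal (exp (-u)) * ENNReal.ofReal (u ^ γ)
      = ENNReal.ofReal (Gamma (γ + 1)) := by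
  have hγ1 : 0 < γ + 1 := by linarith
  have hint : IntegrableOn (fun u => exp (-u) * u ^ γ) (Ioi 0) := by
    simpa using GammaIntegral_convergent hγ1
  rw [Gamma_eq_integral hγ1, add_sub_cancel_right, ofReal_integral_eq_lintegral_ofReal hint
    (ae_restrict_of_forall_mem measurableSet_Ioi fun u hu => by have : 0 < u := hu; positivity)]
  refine setLIntegral_congr_fun measurableSet_Ioi fun u _ => ?_
  rw [ENNReal.ofReal_mul (exp_pos _).le]

lemma lintegral_exp_neg_Ioi_zero :
    ∫⁻ u in Ioi (0 : ℝ), ENNReal.ofReal (exp (-u)) = 1 := by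
  simpa using lintegral_exp_neg_mul_rpow_Ioi (γ := 0) (by norm_num)

lemma lintegral_Ici_exp_neg_mul_eq_lintegral_measure_Icc (ν : Measure ℝ) [SFinite ν] {t : ℝ}
    (ht : 0 < t) :
    ∫⁻ x in Ici 0, ENNReal.ofReal (exp (-t * x)) ∂ν
      = ∫⁻ s in Ioi 0, ENNReal.ofReal (t * exp (-(t * s))) * ν (Icc 0 s) := by
  have hg : Measurable fun s => ENNReal.ofReal (t * exp (-(t * s))) := by fun_prop
  rw [setLIntegral_congr Ioi_ae_eq_Ici,
    ← lintegral_Ici_lintegral_Ici_eq_lintegral_mul_measure_Icc hg]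
  simp only [lintegral_Ici_mul_exp_neg_mul ht, neg_mul]

lemma lintegral_Ioi_comp_mul_left {t : ℝ} (ht : 0 < t) (g : ℝ → ℝ≥0∞) (a : ℝ) :
    ∫⁻ s in Ioi a, ENNReal.ofReal t * g (t * s) = ∫⁻ u in Ioi (t * a), g u := by
  have := lintegral_image_eq_lintegral_abs_deriv_mul (measurableSet_Ioi (a := a))
    (fun s _ => ((hasDerivAt_id' s).const_mul t).hasDerivWithinAt)
    (mul_right_injective₀ ht.ne').injOn g
  rw [image_mul_left_Ioi ht, mul_one, abs_of_pos ht] at this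
  exact this.symm

lemma rpow_mul_lintegral_mul_exp_neg_mul_eq {t : ℝ} (ht : 0 < t) (γ : ℝ) (G : ℝ → ℝ≥0∞) :
    ENNReal.ofReal (t ^ γ) * ∫⁻ s in Ioi 0, ENNReal.ofReal (t * exp (-(t * s))) * G s
      = ∫⁻ u in Ioi 0, ENNReal.ofReal (exp (-u)) * (ENNReal.ofReal (t ^ γ) * G (u / t)) := by
  have hsubst := lintegral_Ioi_comp_mul_left ht
    (fun u => ENNReal.ofReal (exp (-u)) * (ENNReal.ofReal (t ^ γ) * G (u / t))) 0
  rw [mul_zero] at hsubst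
  rw [← hsubst, ← lintegral_const_mul' _ _ ENNReal.ofReal_ne_top]
  refine setLIntegral_congr_fun (measurableSet_Ioi (a := 0)) fun s _ => ?_
  rw [mul_div_cancel_left₀ s ht.ne', ENNReal.ofReal_mul ht.le]
  ring

lemma eventually_le_mul_of_tendsto_div {α : Type*} {l : Filter α} {f g : α → ℝ≥0∞}
    {L K : ℝ≥0∞} (h : Tendsto (fun a => f a / g a) l (𝓝 L)) (hLK : L < K) (hK : K ≠ ⊤)
    (hg : ∀ a, g a ≠ ⊤) :
    ∀ᶠ a in l, f a ≤ K * g a := by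
  filter_upwards [h.eventually_lt_const hLK] with a ha
  exact (ENNReal.div_le_iff_le_mul (Or.inr hK) (Or.inl (hg a))).1 ha.le

lemma tendsto_rpow_mul_comp_div_of_tendsto_div_rpow {G : ℝ → ℝ≥0∞} {γ : ℝ} {L : ℝ≥0∞}
    (h : Tendsto (fun a => G a / ENNReal.ofReal (a ^ γ)) atTop (𝓝 L)) {u : ℝ} (hu : 0 < u) :
    Tendsto (fun t => ENNReal.ofReal (t ^ γ) * G (u / t)) (𝓝[>] 0)
      (𝓝 (ENNReal.ofReal (u ^ γ) * L)) := by
  have hdiv : Tendsto (fun t : ℝ => u / t) (𝓝[>] 0) atTop := by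
    simpa only [div_eq_mul_inv] using tendsto_inv_nhdsGT_zero.const_mul_atTop hu
  refine (ENNReal.Tendsto.const_mul (h.comp hdiv) (Or.inr ENNReal.ofReal_ne_top)).congr' ?_
  filter_upwards [self_mem_nhdsWithin] with t (ht : 0 < t)
  have hut : 0 < u / t := div_pos hu ht
  have hsplit : ENNReal.ofReal (u ^ γ)
      = ENNReal.ofReal (t ^ γ) * ENNReal.ofReal ((u / t) ^ γ) := by
    rw [← ENNReal.ofReal_mul (rpow_nonneg ht.le γ), ← mul_rpow ht.le hut.le,
      mul_div_cancel₀ u ht.ne']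
  rw [Function.comp_apply, hsplit, mul_assoc, ENNReal.mul_div_cancel
    (ENNReal.ofReal_pos.2 (rpow_pos_of_pos hut γ)).ne' ENNReal.ofReal_ne_top]

lemma rpow_mul_comp_div_le {G : ℝ → ℝ≥0∞} (hG : Monotone G) {γ A : ℝ} {K : ℝ≥0∞}
    (hγ : 0 ≤ γ) (hA : ∀ a, A ≤ a → G a ≤ K * ENNReal.ofReal (a ^ γ)) {t u : ℝ}
    (ht : t ∈ Ioc 0 1) (hu : 0 < u) :
    ENNReal.ofReal (t ^ γ) * G (u / t) ≤ K * ENNReal.ofReal (u ^ γ) + G A := by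
  rcases le_or_gt A (u / t) with hle | hlt
  · calc ENNReal.ofReal (t ^ γ) * G (u / t)
          ≤ ENNReal.ofReal (t ^ γ) * (K * ENNReal.ofReal ((u / t) ^ γ)) := by
            gcongr; exact hA _ hle
      _ = K * ENNReal.ofReal (u ^ γ) := by
            rw [mul_left_comm, ← ENNReal.ofReal_mul (rpow_nonneg ht.1.le γ),
              ← mul_rpow ht.1.le (div_pos hu ht.1).le, mul_div_cancel₀ u ht.1.ne']
      _ ≤ _ := le_self_add
  · calc ENNReal.ofReal (t ^ γ) * G (u / t) ≤ 1 * G A := by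
          gcongr
          · exact ENNReal.ofReal_le_one.2 (rpow_le_one ht.1.le ht.2 hγ)
          · exact hG hlt.le
      _ ≤ _ := by rw [one_mul]; exact le_add_self

theorem tendsto_rpow_mul_lintegral_mul_exp_neg_mul {G : ℝ → ℝ≥0∞} (hG : Monotone G) {γ : ℝ}
    (hγ : 0 ≤ γ) {L : ℝ≥0∞} (hL : L ≠ ⊤)
    (h : Tendsto (fun a => G a / ENNReal.ofReal (a ^ γ)) atTop (𝓝 L)) :
    Tendsto (fun t => ENNReal.ofReal (t ^ γ) *
        ∫⁻ s in Ioi 0, ENNReal.ofReal (t * exp (-(t * s))) * G s)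
      (𝓝[>] 0) (𝓝 (L * ENNReal.ofReal (Gamma (γ + 1)))) := by
  have hK : L + 1 ≠ ⊤ := ENNReal.add_ne_top.2 ⟨hL, ENNReal.one_ne_top⟩
  obtain ⟨A, hA⟩ := eventually_atTop.1 <| eventually_le_mul_of_tendsto_div h
    (ENNReal.lt_add_right hL one_ne_zero) hK fun _ => ENNReal.ofReal_ne_top
  have hGA : G A ≠ ⊤ :=
    ne_top_of_le_ne_top (ENNReal.mul_ne_top hK ENNReal.ofReal_ne_top) (hA A le_rfl)
  have hΓ := lintegral_exp_neg_mul_rpow_Ioi (γ := γ) (by linarith)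
  have hbound_fin : ∫⁻ u in Ioi 0,
      ENNReal.ofReal (exp (-u)) * ((L + 1) * ENNReal.ofReal (u ^ γ) + G A) ≠ ⊤ := by
    simp_rw [mul_add, mul_left_comm _ (L + 1)]
    rw [lintegral_add_left (by fun_prop), lintegral_const_mul' _ _ hK, hΓ,
      lintegral_mul_const' _ _ hGA, lintegral_exp_neg_Ioi_zero]
    finiteness
  have hlimit : ∫⁻ u in Ioi 0, ENNReal.ofReal (exp (-u)) * (ENNReal.ofReal (u ^ γ) * L)
      = L * ENNReal.ofReal (Gamma (γ + 1)) := by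
    simp_rw [mul_comm _ L, mul_left_comm _ L]
    rw [lintegral_const_mul' _ _ hL, hΓ]
  have hsubst : ∀ᶠ t in 𝓝[>] 0,
      ∫⁻ u in Ioi 0, ENNReal.ofReal (exp (-u)) * (ENNReal.ofReal (t ^ γ) * G (u / t))
        = ENNReal.ofReal (t ^ γ) * ∫⁻ s in Ioi 0, ENNReal.ofReal (t * exp (-(t * s))) * G s := by
    filter_upwards [self_mem_nhdsWithin] with t (ht : 0 < t)
    exact (rpow_mul_lintegral_mul_exp_neg_mul_eq ht γ G).symm
  rw [← hlimit]
  refine (tendsto_lintegral_filter_of_dominated_convergence _ ?_ ?_ hbound_fin ?_).congr' hsubst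
  · have := hG.measurable
    exact Eventually.of_forall fun t => by fun_prop
  · filter_upwards [Ioc_mem_nhdsGT zero_lt_one] with t ht
    refine ae_restrict_of_forall_mem measurableSet_Ioi fun u hu => ?_
    gcongr
    exact rpow_mul_comp_div_le hG hγ hA ht hu
  · refine ae_restrict_of_forall_mem measurableSet_Ioi fun u hu => ?_
    exact ENNReal.Tendsto.const_mul (tendsto_rpow_mul_comp_div_of_tendsto_div_rpow h hu)
      (Or.inr ENNReal.ofReal_ne_top)

theorem abelian_karamata_general
    (ν : Measure ℝ) [SigmaFinite ν]
    (γ C : ℝ) (hγ : 0 ≤ γ)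
    (h : Tendsto (fun a : ℝ => ν (Set.Icc 0 a) / ENNReal.ofReal (a ^ γ))
      atTop (nhds (ENNReal.ofReal C))) :
    Tendsto (fun t : ℝ =>
        ENNReal.ofReal (t ^ γ) *
          ∫⁻ x in Set.Ici (0:ℝ), ENNReal.ofReal (Real.exp (-t * x)) ∂ν)
      (nhdsWithin 0 (Set.Ioi 0)) (nhds (ENNReal.ofReal (C * Real.Gamma (γ + 1)))) := by
  have hG : Monotone fun a => ν (Icc 0 a) := fun a b hab => measure_mono (Icc_subset_Icc_right hab)
  rw [ENNReal.ofReal_mul' (Gamma_pos_of_pos (by linarith)).le]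
  refine (tendsto_rpow_mul_lintegral_mul_exp_neg_mul hG hγ ENNReal.ofReal_ne_top h).congr' ?_
  filter_upwards [self_mem_nhdsWithin] with t (ht : 0 < t)
  rw [lintegral_Ici_exp_neg_mul_eq_lintegral_measure_Icc ν ht]

/-- Abelian theorem: if `ν([0,a])/a^γ → C` as `a → ∞`, then
`t^γ ∫_{[0,∞)} e^{-tx} dν(x) → C Γ(γ+1)` as `t → 0⁺`. -/
theorem abelian_karamata
    (ν : Measure ℝ) [SigmaFinite ν] (hν : ν (Set.Iio 0) = 0)
    (γ C : ℝ) (hγ : 0 ≤ γ) (hC : 0 ≤ C)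
    (h : Tendsto (fun a : ℝ => ν (Set.Icc 0 a) / ENNReal.ofReal (a ^ γ))
      atTop (nhds (ENNReal.ofReal C))) :
    Tendsto (fun t : ℝ =>
        ENNReal.ofReal (t ^ γ) *
          ∫⁻ x in Set.Ici (0:ℝ), ENNReal.ofReal (Real.exp (-t * x)) ∂ν)
      (nhdsWithin 0 (Set.Ioi 0)) (nhds (ENNReal.ofReal (C * Real.Gamma (γ + 1)))) :=
  abelian_karamata_general ν γ C hγ h
end

section
/- Let ν be a nonnegative σ-finite Borel measure on [0,∞), γ ≥ 0, and C ∈ [0,∞). If limsup_{a→∞} ν([0,a])/a^γ ≤ C, then limsup_{t→0⁺} t^γ ∫_{[0,∞)} e^{-tx} dν(x) ≤ C · Γ(γ+1). -/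
/-!
By Fubini, `∫ e^{-tx} dν(x) = ∫₀^∞ t e^{-ta} ν([0,a)) da`. Fix `K > C`; beyond some `A` we have
`ν([0,a)) ≤ K a^γ`, and that tail contributes at most `K Γ(γ+1) t^{-γ}`, while the integral
over `(0, A]` is at most `t A · K A^γ`, which is `O(t^{γ+1})` after multiplication by `t^γ`.
Hence the limsup is at most `K Γ(γ+1)`, and we let `K ↓ C`.
-/

open MeasureTheory Filter Set Real

theorem ofReal_exp_neg_mul_eq_setLIntegral_Ioi {t : ℝ} (ht : 0 < t) (x : ℝ) :
    ENNReal.ofReal (exp (-t * x)) = ∫⁻ a in Ioi x, ENNReal.ofReal (t * exp (-t * a)) := by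
  have hint : IntegrableOn (fun a ↦ t * exp (-t * a)) (Ioi x) :=
    (integrableOn_exp_mul_Ioi (neg_lt_zero.2 ht) x).const_mul t
  rw [← ofReal_integral_eq_lintegral_ofReal hint (ae_of_all _ fun a ↦ by positivity),
    integral_const_mul, integral_exp_mul_Ioi (neg_lt_zero.2 ht)]
  field_simp

theorem lintegral_exp_neg_mul_eq_lintegral_measure_Iio (μ : Measure ℝ) [SFinite μ] {t : ℝ}
    (ht : 0 < t) :
    ∫⁻ x, ENNReal.ofReal (exp (-t * x)) ∂μ
      = ∫⁻ a, ENNReal.ofReal (t * exp (-t * a)) * μ (Iio a) := by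
  set g : ℝ → ENNReal := fun a ↦ ENNReal.ofReal (t * exp (-t * a))
  have hg : Measurable g := by fun_prop
  have hmeas : Measurable (Function.uncurry fun x a ↦ (Ioi x).indicator g a) := by
    have : (Function.uncurry fun x a ↦ (Ioi x).indicator g a)
        = {q : ℝ × ℝ | q.1 < q.2}.indicator (fun q ↦ g q.2) := by
      ext p; simp [Function.uncurry, indicator]
    rw [this]
    exact (hg.comp measurable_snd).indicator (measurableSet_lt measurable_fst measurable_snd)
  calc ∫⁻ x, ENNReal.ofReal (exp (-t * x)) ∂μ
      = ∫⁻ x, (∫⁻ a, (Ioi x).indicator g a) ∂μ := by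
        simp_rw [lintegral_indicator measurableSet_Ioi,
          ofReal_exp_neg_mul_eq_setLIntegral_Ioi ht]
        rfl
    _ = ∫⁻ a, ∫⁻ x, (Iio a).indicator (fun _ ↦ g a) x ∂μ := by
        rw [lintegral_lintegral_swap hmeas.aemeasurable]
        refine lintegral_congr fun a ↦ lintegral_congr fun x ↦ ?_
        by_cases h : x < a <;> simp [indicator, h]
    _ = ∫⁻ a, g a * μ (Iio a) := by
        simp_rw [lintegral_indicator_const measurableSet_Iio]

theorem lintegral_rpow_mul_exp_neg_mul_Ioi {γ t : ℝ} (hγ : -1 < γ) (ht : 0 < t) :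
    ∫⁻ a in Ioi 0, ENNReal.ofReal (a ^ γ * exp (-t * a))
      = ENNReal.ofReal (Gamma (γ + 1) / t ^ (γ + 1)) := by
  have hint : IntegrableOn (fun a : ℝ ↦ a ^ γ * exp (-t * a)) (Ioi 0) := by
    simpa using integrableOn_rpow_mul_exp_neg_mul_rpow hγ one_pos ht
  have hnn : 0 ≤ᵐ[volume.restrict (Ioi 0)] fun a : ℝ ↦ a ^ γ * exp (-t * a) :=
    (ae_restrict_iff' measurableSet_Ioi).2 (ae_of_all _ fun a (ha : 0 < a) ↦ by positivity)
  rw [← ofReal_integral_eq_lintegral_ofReal hint hnn]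
  have h := integral_rpow_mul_exp_neg_mul_Ioi (by linarith : 0 < γ + 1) ht
  simp only [add_sub_cancel_right, neg_mul] at h ⊢
  rw [h, div_rpow zero_le_one ht.le, one_rpow]
  ring_nf

theorem rpow_mul_lintegral_exp_neg_mul_le (μ : Measure ℝ) [SFinite μ] (hμ : μ (Iio 0) = 0)
    {γ K A t : ℝ} (hγ : -1 < γ) (hA : 0 ≤ A)
    (hbound : ∀ a, A ≤ a → μ (Iio a) ≤ ENNReal.ofReal (K * a ^ γ)) (ht : 0 < t) :
    ENNReal.ofReal (t ^ γ) * ∫⁻ x, ENNReal.ofReal (exp (-t * x)) ∂μ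
      ≤ ENNReal.ofReal (K * (t * A) ^ (γ + 1)) + ENNReal.ofReal (K * Gamma (γ + 1)) := by
  set f : ℝ → ENNReal := fun a ↦ ENNReal.ofReal (t * exp (-t * a)) * μ (Iio a)
  have hsupp : Function.support f ⊆ Ioi 0 := fun a ha ↦ by
    by_contra h
    have : μ (Iio a) = 0 := measure_mono_null (Iio_subset_Iio (not_lt.1 h)) hμ
    simp [f, this] at ha
  have hsmall :
      ∫⁻ a in Ioc 0 A, f a ≤ ENNReal.ofReal (t * A) * ENNReal.ofReal (K * A ^ γ) := by
    have hle : ∀ a ∈ Ioc 0 A, f a ≤ ENNReal.ofReal t * ENNReal.ofReal (K * A ^ γ) :=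
      fun a ha ↦ mul_le_mul'
        (ENNReal.ofReal_le_ofReal (mul_le_of_le_one_right ht.le
          (exp_le_one_iff.2 (by nlinarith [ha.1]))))
        ((measure_mono (Iio_subset_Iio ha.2)).trans (hbound A le_rfl))
    calc ∫⁻ a in Ioc 0 A, f a
        ≤ ∫⁻ _ in Ioc 0 A, ENNReal.ofReal t * ENNReal.ofReal (K * A ^ γ) :=
          setLIntegral_mono' measurableSet_Ioc hle
      _ = ENNReal.ofReal (t * A) * ENNReal.ofReal (K * A ^ γ) := by
          rw [setLIntegral_const, volume_Ioc, sub_zero, ENNReal.ofReal_mul ht.le]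
          ring
  have hlarge : ∫⁻ a in Ioi A, f a
      ≤ ENNReal.ofReal (K * t) * ENNReal.ofReal (Gamma (γ + 1) / t ^ (γ + 1)) := by
    have hle : ∀ a ∈ Ioi A,
        f a ≤ ENNReal.ofReal (K * t) * ENNReal.ofReal (a ^ γ * exp (-t * a)) := fun a ha ↦ by
      have hpos : 0 < a := hA.trans_lt ha
      calc f a ≤ ENNReal.ofReal (t * exp (-t * a)) * ENNReal.ofReal (K * a ^ γ) :=
            mul_le_mul' le_rfl (hbound a (le_of_lt ha))
        _ = ENNReal.ofReal (K * t) * ENNReal.ofReal (a ^ γ * exp (-t * a)) := by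
            rw [← ENNReal.ofReal_mul (by positivity), ← ENNReal.ofReal_mul' (by positivity)]
            ring_nf
    calc ∫⁻ a in Ioi A, f a
        ≤ ∫⁻ a in Ioi 0, ENNReal.ofReal (K * t) * ENNReal.ofReal (a ^ γ * exp (-t * a)) :=
          (setLIntegral_mono' measurableSet_Ioi hle).trans
            (lintegral_mono_set (Ioi_subset_Ioi hA))
      _ = ENNReal.ofReal (K * t) * ENNReal.ofReal (Gamma (γ + 1) / t ^ (γ + 1)) := by
          rw [lintegral_const_mul' _ _ ENNReal.ofReal_ne_top,
            lintegral_rpow_mul_exp_neg_mul_Ioi hγ ht]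
  have hγ1 : γ + 1 ≠ 0 := by linarith
  calc ENNReal.ofReal (t ^ γ) * ∫⁻ x, ENNReal.ofReal (exp (-t * x)) ∂μ
      = ENNReal.ofReal (t ^ γ) * ((∫⁻ a in Ioc 0 A, f a) + ∫⁻ a in Ioi A, f a) := by
        rw [lintegral_exp_neg_mul_eq_lintegral_measure_Iio μ ht,
          ← setLIntegral_eq_of_support_subset hsupp, ← Ioc_union_Ioi_eq_Ioi hA,
          lintegral_union measurableSet_Ioi Ioc_disjoint_Ioi_same]
    _ ≤ ENNReal.ofReal (t ^ γ) * (ENNReal.ofReal (t * A) * ENNReal.ofReal (K * A ^ γ)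
          + ENNReal.ofReal (K * t) * ENNReal.ofReal (Gamma (γ + 1) / t ^ (γ + 1))) := by
        gcongr
    _ = ENNReal.ofReal (K * (t * A) ^ (γ + 1)) + ENNReal.ofReal (K * Gamma (γ + 1)) := by
        have hΓ : 0 ≤ Gamma (γ + 1) / t ^ (γ + 1) :=
          div_nonneg (Gamma_pos_of_pos (by linarith)).le (by positivity)
        rw [mul_add, ← mul_assoc, ← mul_assoc, ← ENNReal.ofReal_mul (by positivity),
          ← ENNReal.ofReal_mul (by positivity), ← ENNReal.ofReal_mul (by positivity),
          ← ENNReal.ofReal_mul' hΓ, rpow_add_one' ht.le hγ1,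
          rpow_add_one' (mul_nonneg ht.le hA) hγ1, mul_rpow ht.le hA]
        congr 2
        · ring
        · field_simp

theorem eventually_le_ofReal_mul_rpow_of_limsup_div_le {f : ℝ → ENNReal} {γ C K : ℝ}
    (h : limsup (fun a ↦ f a / ENNReal.ofReal (a ^ γ)) atTop ≤ ENNReal.ofReal C)
    (hK : 0 < K) (hCK : C < K) :
    ∀ᶠ a in atTop, f a ≤ ENNReal.ofReal (K * a ^ γ) := by
  have hlt : ENNReal.ofReal C < ENNReal.ofReal K := (ENNReal.ofReal_lt_ofReal_iff hK).2 hCK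
  filter_upwards [eventually_lt_of_limsup_lt (h.trans_lt hlt), eventually_gt_atTop 0]
    with a ha ha0
  rw [ENNReal.div_lt_iff (Or.inl (ENNReal.ofReal_pos.2 (rpow_pos_of_pos ha0 γ)).ne')
    (Or.inl ENNReal.ofReal_ne_top), ← ENNReal.ofReal_mul hK.le] at ha
  exact ha.le

theorem tendsto_ofReal_mul_rpow_add_nhdsGT_zero {γ K A : ℝ} {c : ENNReal} (hγ : -1 < γ) :
    Tendsto (fun t ↦ ENNReal.ofReal (K * (t * A) ^ (γ + 1)) + c) (nhdsWithin 0 (Ioi 0))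
      (nhds c) := by
  have hcont : Continuous fun t : ℝ ↦ K * (t * A) ^ (γ + 1) :=
    continuous_const.mul ((continuous_rpow_const (by linarith)).comp (continuous_mul_const A))
  have hzero : Tendsto (fun t : ℝ ↦ K * (t * A) ^ (γ + 1)) (nhdsWithin 0 (Ioi 0)) (nhds 0) := by
    simpa [zero_rpow (by linarith : γ + 1 ≠ 0)] using
      (hcont.tendsto 0).mono_left nhdsWithin_le_nhds
  simpa using (ENNReal.tendsto_ofReal hzero).add_const c

theorem abelian_limsup_general
    (ν : Measure ℝ) [SigmaFinite ν]
    (γ C : ℝ) (hγ : 0 ≤ γ) (hC : 0 ≤ C)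
    (h : Filter.limsup (fun a : ℝ => ν (Set.Icc 0 a) / ENNReal.ofReal (a ^ γ)) atTop
      ≤ ENNReal.ofReal C) :
    Filter.limsup (fun t : ℝ =>
        ENNReal.ofReal (t ^ γ) *
          ∫⁻ x in Set.Ici (0:ℝ), ENNReal.ofReal (Real.exp (-t * x)) ∂ν)
      (nhdsWithin 0 (Set.Ioi 0))
      ≤ ENNReal.ofReal (C * Real.Gamma (γ + 1)) := by
  have hγ' : -1 < γ := by linarith
  have hcont : Tendsto (fun K ↦ ENNReal.ofReal (K * Real.Gamma (γ + 1))) (nhdsWithin C (Ioi C))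
      (nhds (ENNReal.ofReal (C * Real.Gamma (γ + 1)))) :=
    ((ENNReal.continuous_ofReal.comp (continuous_mul_const _)).tendsto C).mono_left
      nhdsWithin_le_nhds
  refine ge_of_tendsto hcont (eventually_nhdsWithin_of_forall fun K (hCK : C < K) ↦ ?_)
  obtain ⟨A, hA⟩ := eventually_atTop.1
    (eventually_le_ofReal_mul_rpow_of_limsup_div_le h (hC.trans_lt hCK) hCK)
  have hbound : ∀ a, max A 0 ≤ a → ν.restrict (Ici 0) (Iio a) ≤ ENNReal.ofReal (K * a ^ γ) :=
    fun a ha ↦ by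
      rw [Measure.restrict_apply measurableSet_Iio, Iio_inter_Ici]
      exact (measure_mono Ico_subset_Icc_self).trans (hA a (le_of_max_le_left ha))
  refine (limsup_le_limsup ?_).trans
    (tendsto_ofReal_mul_rpow_add_nhdsGT_zero (K := K) (A := max A 0) hγ').limsup_eq.le
  filter_upwards [self_mem_nhdsWithin] with t ht
  exact rpow_mul_lintegral_exp_neg_mul_le _ (by simp [Iio_inter_Ici]) hγ' (le_max_right A 0)
    hbound ht

/-- One-sided Abelian estimate (limsup version): if `limsup_{a→∞} ν([0,a])/a^γ ≤ C < ∞`,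
then `limsup_{t→0⁺} t^γ ∫_{[0,∞)} e^{-tx} dν(x) ≤ C Γ(γ+1)`. -/
theorem abelian_limsup
    (ν : Measure ℝ) [SigmaFinite ν] (hν : ν (Set.Iio 0) = 0)
    (γ C : ℝ) (hγ : 0 ≤ γ) (hC : 0 ≤ C)
    (h : Filter.limsup (fun a : ℝ => ν (Set.Icc 0 a) / ENNReal.ofReal (a ^ γ)) atTop
      ≤ ENNReal.ofReal C) :
    Filter.limsup (fun t : ℝ =>
        ENNReal.ofReal (t ^ γ) *
          ∫⁻ x in Set.Ici (0:ℝ), ENNReal.ofReal (Real.exp (-t * x)) ∂ν)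
      (nhdsWithin 0 (Set.Ioi 0))
      ≤ ENNReal.ofReal (C * Real.Gamma (γ + 1)) :=
  abelian_limsup_general ν γ C hγ hC h
end

section
/- Let ν be a nonnegative σ-finite Borel measure on [0,∞), γ ≥ 0, and c ≥ 0. If liminf_{a→∞} ν([0,a])/a^γ ≥ c, then liminf_{t→0⁺} t^γ ∫_{[0,∞)} e^{-tx} dν(x) ≥ c · Γ(γ+1). -/
/-!
By Tonelli, `∫ e^{-tx} dν(x) = ∫₀^∞ t e^{-ts} ν([0,s]) ds`.
If `ν([0,s]) ≥ q s^γ` for `s > A`, the substitution `v = ts` bounds `t^γ` times this from below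
by `q ∫_{tA}^∞ e^{-v} v^γ dv`, which tends to `q Γ(γ+1)` as `t → 0⁺`.
Finally let `q` increase to the liminf of `ν([0,a]) / a^γ`.
-/

open MeasureTheory Filter Set Real
open scoped ENNReal Topology

theorem tendsto_measure_Ioi_nhdsGT (μ : Measure ℝ) (a : ℝ) :
    Tendsto (fun r => μ (Ioi r)) (𝓝[>] a) (𝓝 (μ (Ioi a))) := by
  have : (atBot : Filter (Ioi a)).IsCountablyGenerated := by
    rw [← comap_coe_Ioi_nhdsGT a]
    infer_instance
  have hunion : ⋃ r : Ioi a, Ioi (r : ℝ) = Ioi a := by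
    ext x
    simp only [mem_iUnion, mem_Ioi, Subtype.exists, exists_prop]
    exact ⟨fun ⟨r, hr, hx⟩ => lt_trans hr hx, exists_between⟩
  have := tendsto_measure_iUnion_atBot (μ := μ) (s := fun r : Ioi a => Ioi (r : ℝ))
    fun r s hrs => Ioi_subset_Ioi hrs
  rw [hunion] at this
  rwa [← map_coe_Ioi_atBot a, tendsto_map'_iff]

theorem setLIntegral_Ioi_comp_mul_left {t : ℝ} (ht : 0 < t) (f : ℝ → ℝ≥0∞) (a : ℝ) :
    ∫⁻ s in Ioi a, f (t * s) = ENNReal.ofReal t⁻¹ * ∫⁻ v in Ioi (t * a), f v := by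
  have hmp : MeasurePreserving (t * ·) volume (ENNReal.ofReal |t⁻¹| • volume) :=
    ⟨measurable_const_mul t, Real.map_volume_mul_left ht.ne'⟩
  rw [hmp.setLIntegral_comp_emb (measurableEmbedding_mulLeft₀ ht.ne'), image_mul_left_Ioi ht,
    Measure.restrict_smul, lintegral_smul_measure, abs_of_pos (inv_pos.2 ht), smul_eq_mul]

theorem lintegral_Ici_ofReal_mul_exp_neg_mul {t : ℝ} (ht : 0 < t) (x : ℝ) :
    ∫⁻ s in Ici x, ENNReal.ofReal (t * exp (-t * s)) = ENNReal.ofReal (exp (-t * x)) := by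
  have hint : IntegrableOn (fun s => t * exp (-t * s)) (Ioi x) :=
    (integrableOn_exp_mul_Ioi (neg_lt_zero.2 ht) x).const_mul t
  rw [setLIntegral_congr Ioi_ae_eq_Ici.symm, ← ofReal_integral_eq_lintegral_ofReal hint
    (.of_forall fun s => by positivity), integral_const_mul,
    integral_exp_mul_Ioi (neg_lt_zero.2 ht)]
  congr 1
  field_simp

theorem lintegral_lintegral_Ici_eq_lintegral_mul_measure_Iic (μ : Measure ℝ) [SFinite μ]
    {g : ℝ → ℝ≥0∞} (hg : Measurable g) :
    ∫⁻ x, (∫⁻ s in Ici x, g s) ∂μ = ∫⁻ s, g s * μ (Iic s) := by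
  set F : ℝ × ℝ → ℝ≥0∞ := {p | p.1 ≤ p.2}.indicator (g ∘ Prod.snd)
  have hF : Measurable F :=
    (hg.comp measurable_snd).indicator (measurableSet_le measurable_fst measurable_snd)
  calc ∫⁻ x, (∫⁻ s in Ici x, g s) ∂μ = ∫⁻ x, (∫⁻ s, F (x, s)) ∂μ := by
        refine lintegral_congr fun x => ?_
        rw [← lintegral_indicator measurableSet_Ici]
        rfl
    _ = ∫⁻ s, ∫⁻ x, F (x, s) ∂μ := lintegral_lintegral_swap hF.aemeasurable
    _ = ∫⁻ s, g s * μ (Iic s) := by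
        refine lintegral_congr fun s => ?_
        rw [← lintegral_indicator_const measurableSet_Iic]
        rfl

theorem lintegral_exp_neg_mul_eq_lintegral_measure_Icc (ν : Measure ℝ) [SFinite ν] {t : ℝ}
    (ht : 0 < t) :
    ∫⁻ x in Ici 0, ENNReal.ofReal (exp (-t * x)) ∂ν
      = ∫⁻ s, ENNReal.ofReal (t * exp (-t * s)) * ν (Icc 0 s) := by
  have hg : Measurable fun s => ENNReal.ofReal (t * exp (-t * s)) := by fun_prop
  simp_rw [← lintegral_Ici_ofReal_mul_exp_neg_mul ht,
    lintegral_lintegral_Ici_eq_lintegral_mul_measure_Iic _ hg,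
    Measure.restrict_apply measurableSet_Iic, Iic_inter_Ici]

theorem ofReal_Gamma_eq_lintegral {s : ℝ} (hs : 0 < s) :
    ENNReal.ofReal (Gamma s) = ∫⁻ v in Ioi 0, ENNReal.ofReal (exp (-v) * v ^ (s - 1)) := by
  rw [Gamma_eq_integral hs, ofReal_integral_eq_lintegral_ofReal (GammaIntegral_convergent hs)]
  exact (ae_restrict_iff' measurableSet_Ioi).2 (.of_forall fun v hv => by
    have := rpow_nonneg (le_of_lt hv) (s - 1); positivity)

theorem mul_lintegral_Ioi_le_rpow_mul_lintegral_exp_neg_mul (ν : Measure ℝ) [SFinite ν]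
    {γ A t : ℝ} {q : ℝ≥0∞} (hA : 0 ≤ A) (ht : 0 < t)
    (hq : ∀ s, A < s → q * ENNReal.ofReal (s ^ γ) ≤ ν (Icc 0 s)) :
    q * ∫⁻ v in Ioi (t * A), ENNReal.ofReal (exp (-v) * v ^ γ)
      ≤ ENNReal.ofReal (t ^ γ) * ∫⁻ x in Ici 0, ENNReal.ofReal (exp (-t * x)) ∂ν := by
  have hscale : ∫⁻ v in Ioi (t * A), ENNReal.ofReal (exp (-v) * v ^ γ)
      = ∫⁻ s in Ioi A, ENNReal.ofReal t * ENNReal.ofReal (exp (-(t * s)) * (t * s) ^ γ) := by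
    rw [lintegral_const_mul' _ _ ENNReal.ofReal_ne_top,
      setLIntegral_Ioi_comp_mul_left ht (fun v => ENNReal.ofReal (exp (-v) * v ^ γ)),
      ← mul_assoc, ← ENNReal.ofReal_mul ht.le, mul_inv_cancel₀ ht.ne', ENNReal.ofReal_one,
      one_mul]
  calc q * ∫⁻ v in Ioi (t * A), ENNReal.ofReal (exp (-v) * v ^ γ)
      = ∫⁻ s in Ioi A, ENNReal.ofReal (t ^ γ) *
          (ENNReal.ofReal (t * exp (-t * s)) * (q * ENNReal.ofReal (s ^ γ))) := by
        rw [hscale, ← lintegral_const_mul _ (by fun_prop)]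
        refine setLIntegral_congr_fun measurableSet_Ioi fun s hs => ?_
        have hs0 : 0 ≤ s := hA.trans (le_of_lt hs)
        rw [mul_rpow ht.le hs0, ENNReal.ofReal_mul (exp_pos _).le,
          ENNReal.ofReal_mul (rpow_nonneg ht.le γ), ENNReal.ofReal_mul ht.le, neg_mul]
        ring
    _ ≤ ∫⁻ s in Ioi A, ENNReal.ofReal (t ^ γ) *
          (ENNReal.ofReal (t * exp (-t * s)) * ν (Icc 0 s)) := by
        refine setLIntegral_mono' measurableSet_Ioi fun s hs => ?_
        gcongr
        exact hq s hs
    _ ≤ ∫⁻ s, ENNReal.ofReal (t ^ γ) * (ENNReal.ofReal (t * exp (-t * s)) * ν (Icc 0 s)) :=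
        setLIntegral_le_lintegral _ _
    _ = ENNReal.ofReal (t ^ γ) * ∫⁻ x in Ici 0, ENNReal.ofReal (exp (-t * x)) ∂ν := by
        rw [lintegral_const_mul' _ _ ENNReal.ofReal_ne_top,
          lintegral_exp_neg_mul_eq_lintegral_measure_Icc ν ht]

theorem liminf_div_rpow_mul_Gamma_le_liminf_rpow_mul_lintegral_exp_neg_mul (ν : Measure ℝ)
    [SFinite ν] {γ : ℝ} (hγ : -1 < γ) :
    liminf (fun a => ν (Icc 0 a) / ENNReal.ofReal (a ^ γ)) atTop * ENNReal.ofReal (Gamma (γ + 1))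
      ≤ liminf (fun t => ENNReal.ofReal (t ^ γ) *
          ∫⁻ x in Ici 0, ENNReal.ofReal (exp (-t * x)) ∂ν) (𝓝[>] 0) := by
  refine ENNReal.mul_le_of_forall_lt fun q hq b hb => ?_
  obtain ⟨A, hA⟩ := eventually_atTop.1 <|
    (eventually_lt_of_lt_liminf hq).mono fun s hs => ENNReal.mul_le_of_le_div hs.le
  have hA1 : 0 < max A 1 := lt_max_of_lt_right one_pos
  have hscale : Tendsto (fun t => t * max A 1) (𝓝[>] 0) (𝓝[>] 0) := by
    refine tendsto_nhdsWithin_of_tendsto_nhds_of_eventually_within _ ?_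
      (eventually_mem_nhdsWithin.mono fun t ht => mul_pos ht hA1)
    simpa using ((continuous_mul_const (max A 1)).tendsto (0 : ℝ)).mono_left nhdsWithin_le_nhds
  have htail : Tendsto
      (fun t => q * ∫⁻ v in Ioi (t * max A 1), ENNReal.ofReal (exp (-v) * v ^ γ)) (𝓝[>] 0)
      (𝓝 (q * ENNReal.ofReal (Gamma (γ + 1)))) := by
    have hΓ := ofReal_Gamma_eq_lintegral (neg_lt_iff_pos_add.1 hγ)
    rw [add_sub_cancel_right] at hΓ
    refine ENNReal.Tendsto.const_mul ?_ (Or.inr hq.ne_top)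
    simp_rw [hΓ, ← withDensity_apply _ measurableSet_Ioi]
    exact (tendsto_measure_Ioi_nhdsGT _ 0).comp hscale
  calc q * b ≤ q * ENNReal.ofReal (Gamma (γ + 1)) := by gcongr
    _ = liminf (fun t => q * ∫⁻ v in Ioi (t * max A 1), ENNReal.ofReal (exp (-v) * v ^ γ))
          (𝓝[>] 0) := htail.liminf_eq.symm
    _ ≤ _ := liminf_le_liminf <| eventually_mem_nhdsWithin.mono fun t ht =>
          mul_lintegral_Ioi_le_rpow_mul_lintegral_exp_neg_mul ν hA1.le ht
            fun s hs => hA s ((le_max_left A 1).trans hs.le)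

theorem abelian_liminf_general
    (ν : Measure ℝ) [SigmaFinite ν]
    (γ c : ℝ) (hγ : 0 ≤ γ)
    (h : ENNReal.ofReal c ≤
      Filter.liminf (fun a : ℝ => ν (Set.Icc 0 a) / ENNReal.ofReal (a ^ γ)) atTop) :
    ENNReal.ofReal (c * Real.Gamma (γ + 1)) ≤
      Filter.liminf (fun t : ℝ =>
        ENNReal.ofReal (t ^ γ) *
          ∫⁻ x in Set.Ici (0:ℝ), ENNReal.ofReal (Real.exp (-t * x)) ∂ν)
      (nhdsWithin 0 (Set.Ioi 0)) := by
  calc ENNReal.ofReal (c * Real.Gamma (γ + 1))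
      = ENNReal.ofReal c * ENNReal.ofReal (Real.Gamma (γ + 1)) :=
        ENNReal.ofReal_mul' (Real.Gamma_pos_of_pos (by linarith)).le
    _ ≤ liminf (fun a : ℝ => ν (Icc 0 a) / ENNReal.ofReal (a ^ γ)) atTop *
          ENNReal.ofReal (Real.Gamma (γ + 1)) := by gcongr
    _ ≤ _ := liminf_div_rpow_mul_Gamma_le_liminf_rpow_mul_lintegral_exp_neg_mul ν (by linarith)

/-- One-sided Abelian estimate (liminf version): if `liminf_{a→∞} ν([0,a])/a^γ ≥ c`,
then `liminf_{t→0⁺} t^γ ∫_{[0,∞)} e^{-tx} dν(x) ≥ c Γ(γ+1)`. -/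
theorem abelian_liminf
    (ν : Measure ℝ) [SigmaFinite ν] (hν : ν (Set.Iio 0) = 0)
    (γ c : ℝ) (hγ : 0 ≤ γ) (hc : 0 ≤ c)
    (h : ENNReal.ofReal c ≤
      Filter.liminf (fun a : ℝ => ν (Set.Icc 0 a) / ENNReal.ofReal (a ^ γ)) atTop) :
    ENNReal.ofReal (c * Real.Gamma (γ + 1)) ≤
      Filter.liminf (fun t : ℝ =>
        ENNReal.ofReal (t ^ γ) *
          ∫⁻ x in Set.Ici (0:ℝ), ENNReal.ofReal (Real.exp (-t * x)) ∂ν)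
      (nhdsWithin 0 (Set.Ioi 0)) :=
  abelian_liminf_general ν γ c hγ h
end

section
/- Let ν be a nonnegative σ-finite Borel measure on [0,∞) and γ ≥ 0. If limsup_{t→0⁺} t^γ ∫_{[0,∞)} e^{-st} dν(s) ≤ C₀ < ∞, then limsup_{λ→∞} ν([0,λ])/λ^γ ≤ e·C₀. -/
/-!
Chebyshev's trick for the Laplace transform: on `[0, λ]` the weight `e^{-s/λ}` is at least
`e⁻¹`, so `ν([0, λ]) ≤ e · ∫ e^{-s/λ} dν(s)`. Multiplying by `λ^{-γ}` and putting `t = 1/λ`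
bounds `ν([0, λ]) / λ^γ` by `e · t^γ ∫ e^{-st} dν(s)`, and `λ → ∞` corresponds to `t → 0⁺`.
-/

open MeasureTheory Filter Set Real
open scoped ENNReal Topology

noncomputable def laplaceIci (ν : Measure ℝ) (t : ℝ) : ℝ≥0∞ :=
  ∫⁻ s in Ici (0 : ℝ), ENNReal.ofReal (exp (-s * t)) ∂ν

lemma exp_neg_one_mul_measure_Icc_le_laplaceIci (ν : Measure ℝ) {lam : ℝ} (hlam : 0 < lam) :
    ENNReal.ofReal (exp (-1)) * ν (Icc 0 lam) ≤ laplaceIci ν lam⁻¹ := by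
  have hweight : ∀ s ∈ Icc 0 lam, ENNReal.ofReal (exp (-1)) ≤ ENNReal.ofReal (exp (-s * lam⁻¹)) := by
    intro s hs
    refine ENNReal.ofReal_le_ofReal (exp_le_exp.2 ?_)
    have : s * lam⁻¹ ≤ 1 := by rw [← div_eq_mul_inv, div_le_one hlam]; exact hs.2
    linarith
  calc ENNReal.ofReal (exp (-1)) * ν (Icc 0 lam)
      = ∫⁻ _ in Icc 0 lam, ENNReal.ofReal (exp (-1)) ∂ν := (setLIntegral_const _ _).symm
    _ ≤ ∫⁻ s in Icc 0 lam, ENNReal.ofReal (exp (-s * lam⁻¹)) ∂ν :=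
      setLIntegral_mono' measurableSet_Icc hweight
    _ ≤ laplaceIci ν lam⁻¹ := lintegral_mono_set fun _ hs => hs.1

lemma measure_Icc_div_rpow_le_exp_one_mul_laplaceIci (ν : Measure ℝ) (γ : ℝ) {lam : ℝ}
    (hlam : 0 < lam) :
    ν (Icc 0 lam) / ENNReal.ofReal (lam ^ γ)
      ≤ ENNReal.ofReal (exp 1) * (ENNReal.ofReal (lam⁻¹ ^ γ) * laplaceIci ν lam⁻¹) := by
  have hinv : ENNReal.ofReal (lam⁻¹ ^ γ) = (ENNReal.ofReal (lam ^ γ))⁻¹ := by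
    rw [inv_rpow hlam.le, ENNReal.ofReal_inv_of_pos (rpow_pos_of_pos hlam γ)]
  have hexp : ENNReal.ofReal (exp 1) * ENNReal.ofReal (exp (-1)) = 1 := by
    rw [← ENNReal.ofReal_mul (exp_pos 1).le, ← exp_add]
    norm_num
  calc ν (Icc 0 lam) / ENNReal.ofReal (lam ^ γ)
      = ENNReal.ofReal (exp 1) *
          (ENNReal.ofReal (lam⁻¹ ^ γ) * (ENNReal.ofReal (exp (-1)) * ν (Icc 0 lam))) := by
        rw [div_eq_mul_inv, ← hinv, mul_left_comm _ (ENNReal.ofReal (exp (-1))), ← mul_assoc,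
          hexp, one_mul, mul_comm]
    _ ≤ ENNReal.ofReal (exp 1) * (ENNReal.ofReal (lam⁻¹ ^ γ) * laplaceIci ν lam⁻¹) := by
        gcongr
        exact exp_neg_one_mul_measure_Icc_le_laplaceIci ν hlam

lemma limsup_comp_inv_atTop_le {α : Type*} [CompleteLattice α] (f : ℝ → α) :
    limsup (fun x => f x⁻¹) atTop ≤ limsup f (𝓝[>] 0) :=
  (limsup_comp f _ atTop).trans_le (limsup_le_limsup_of_le tendsto_inv_atTop_nhdsGT_zero)

theorem tauberian_limsup_general
    (ν : Measure ℝ)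
    (γ C₀ : ℝ)
    (h : Filter.limsup (fun t : ℝ =>
        ENNReal.ofReal (t ^ γ) *
          ∫⁻ s in Set.Ici (0:ℝ), ENNReal.ofReal (Real.exp (-s * t)) ∂ν)
      (nhdsWithin 0 (Set.Ioi 0)) ≤ ENNReal.ofReal C₀) :
    Filter.limsup (fun lam : ℝ => ν (Set.Icc 0 lam) / ENNReal.ofReal (lam ^ γ)) atTop
      ≤ ENNReal.ofReal (Real.exp 1 * C₀) := by
  set F : ℝ → ℝ≥0∞ := fun t => ENNReal.ofReal (t ^ γ) * laplaceIci ν t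
  calc limsup (fun lam : ℝ => ν (Icc 0 lam) / ENNReal.ofReal (lam ^ γ)) atTop
      ≤ limsup (fun lam : ℝ => ENNReal.ofReal (exp 1) * F lam⁻¹) atTop :=
        limsup_le_limsup (eventually_gt_atTop 0 |>.mono fun _ hlam =>
          measure_Icc_div_rpow_le_exp_one_mul_laplaceIci ν γ hlam)
    _ = ENNReal.ofReal (exp 1) * limsup (fun lam : ℝ => F lam⁻¹) atTop :=
        ENNReal.limsup_const_mul_of_ne_top ENNReal.ofReal_ne_top
    _ ≤ ENNReal.ofReal (exp 1) * ENNReal.ofReal C₀ := by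
        gcongr
        exact (limsup_comp_inv_atTop_le F).trans h
    _ = ENNReal.ofReal (exp 1 * C₀) := (ENNReal.ofReal_mul (exp_pos 1).le).symm

/-- One-sided Tauberian estimate: if `limsup_{t→0⁺} t^γ ∫ e^{-st} dν(s) ≤ C₀ < ∞`,
then `limsup_{λ→∞} ν([0,λ])/λ^γ ≤ e C₀`. -/
theorem tauberian_limsup
    (ν : Measure ℝ) [SigmaFinite ν] (hν : ν (Set.Iio 0) = 0)
    (γ C₀ : ℝ) (hγ : 0 ≤ γ) (hC₀ : 0 ≤ C₀)
    (h : Filter.limsup (fun t : ℝ =>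
        ENNReal.ofReal (t ^ γ) *
          ∫⁻ s in Set.Ici (0:ℝ), ENNReal.ofReal (Real.exp (-s * t)) ∂ν)
      (nhdsWithin 0 (Set.Ioi 0)) ≤ ENNReal.ofReal C₀) :
    Filter.limsup (fun lam : ℝ => ν (Set.Icc 0 lam) / ENNReal.ofReal (lam ^ γ)) atTop
      ≤ ENNReal.ofReal (Real.exp 1 * C₀) :=
  tauberian_limsup_general ν γ C₀ h
end

section
/- Let ν be a nonnegative σ-finite Borel measure on [0,∞), γ > 0, and D ≥ 0. If lim_{t→0⁺} t^γ ∫_{[0,∞)} e^{-tx} dν(x) = D, then lim_{a→∞} ν([0,a))/a^γ = D/Γ(γ+1). -/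
/-!
Karamata's argument. Substituting `(k + 1) t` for `t` in the hypothesis gives
`t ^ γ ∫ φ (e^{-tx}) dν(x) → D / Γ(γ) ∫₀^∞ u ^ (γ - 1) φ (e^{-u}) du` for `φ y = y ^ (k + 1)`,
hence for `φ y = y p(y)` with `p` a polynomial. As `D ≥ 0`, this limit relation passes to every
`φ` that can be squeezed between functions satisfying it whose right-hand sides are arbitrarily
close: first (Weierstrass) to `y h(y)` with `h` continuous, then (piecewise linear ramps) to the
indicator of `(e^{-s}, 1]`. For that indicator the left-hand side is `t ^ γ ν([0, s / t))` and the
right-hand side is `D / Γ(γ) ∫₀^s u ^ (γ - 1) du = D s ^ γ / Γ(γ + 1)`.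
-/

open MeasureTheory Filter Set Real Topology

namespace Karamata

noncomputable def gammaMoment (γ : ℝ) (φ : ℝ → ℝ) : ℝ := ∫ u in Ioi 0, u ^ (γ - 1) * φ (exp (-u))

structure IsTest (ν : Measure ℝ) (γ : ℝ) (φ : ℝ → ℝ) : Prop where
  integrableOn_laplace : ∀ t > 0, IntegrableOn (fun x => φ (exp (-t * x))) (Ici 0) ν
  integrableOn_gamma : IntegrableOn (fun u => u ^ (γ - 1) * φ (exp (-u))) (Ioi 0)

/-- `D / Γ(γ) * gammaMoment γ φ` is what `t ^ γ * ∫ φ (exp (-t * x)) dν(x)` equals, for every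
`t > 0`, when `dν = D / Γ(γ) * x ^ (γ - 1) dx` (substitute `u = t * x`). -/
def HasLimit (ν : Measure ℝ) (γ D : ℝ) (φ : ℝ → ℝ) : Prop :=
  Tendsto (fun t => t ^ γ * ∫ x in Ici 0, φ (exp (-t * x)) ∂ν) (𝓝[>] 0)
    (𝓝 (D / Gamma γ * gammaMoment γ φ))

variable {ν : Measure ℝ} {γ D : ℝ} {φ ψ : ℝ → ℝ}

lemma lintegral_exp_neg_mul_lt_top
    (h : Tendsto (fun t : ℝ => ENNReal.ofReal (t ^ γ) *
      ∫⁻ x in Ici 0, ENNReal.ofReal (exp (-t * x)) ∂ν) (𝓝[>] 0) (𝓝 (ENNReal.ofReal D)))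
    {t : ℝ} (ht : 0 < t) :
    ∫⁻ x in Ici 0, ENNReal.ofReal (exp (-t * x)) ∂ν < ⊤ := by
  obtain ⟨s, hs_fin, hs_pos, hst⟩ :=
    ((h.eventually_lt_const ENNReal.ofReal_lt_top).and (Ioo_mem_nhdsGT ht)).exists
  have hs : ∫⁻ x in Ici 0, ENNReal.ofReal (exp (-s * x)) ∂ν < ⊤ :=
    ENNReal.lt_top_of_mul_ne_top_right hs_fin.ne (by simp [rpow_pos_of_pos hs_pos])
  refine lt_of_le_of_lt (setLIntegral_mono' measurableSet_Ici fun x (hx : 0 ≤ x) => ?_) hs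
  exact ENNReal.ofReal_le_ofReal (exp_le_exp.2 (by nlinarith))

lemma integrableOn_exp_neg_mul {t : ℝ}
    (ht : ∫⁻ x in Ici 0, ENNReal.ofReal (exp (-t * x)) ∂ν < ⊤) :
    IntegrableOn (fun x => exp (-t * x)) (Ici 0) ν :=
  ⟨by fun_prop, (hasFiniteIntegral_iff_ofReal (ae_of_all _ fun _ => (exp_pos _).le)).2 ht⟩

lemma tendsto_rpow_mul_integral_exp_neg_mul (hD : 0 ≤ D)
    (h : Tendsto (fun t : ℝ => ENNReal.ofReal (t ^ γ) *
      ∫⁻ x in Ici 0, ENNReal.ofReal (exp (-t * x)) ∂ν) (𝓝[>] 0) (𝓝 (ENNReal.ofReal D))) :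
    Tendsto (fun t => t ^ γ * ∫ x in Ici 0, exp (-t * x) ∂ν) (𝓝[>] 0) (𝓝 D) := by
  have hreal := (ENNReal.tendsto_toReal ENNReal.ofReal_ne_top).comp h
  rw [ENNReal.toReal_ofReal hD] at hreal
  refine hreal.congr' (eventually_nhdsWithin_of_forall fun t (ht : 0 < t) => ?_)
  dsimp only [Function.comp_apply]
  rw [ENNReal.toReal_mul, ENNReal.toReal_ofReal (rpow_nonneg ht.le γ),
    integral_eq_lintegral_of_nonneg_ae (ae_of_all _ fun _ => (exp_pos _).le) (by fun_prop)]

lemma exp_neg_mem_Ioc {x : ℝ} (hx : 0 ≤ x) : exp (-x) ∈ Ioc 0 1 :=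
  ⟨exp_pos _, exp_le_one_iff.2 (neg_nonpos.2 hx)⟩

lemma exp_neg_mul_mem_Ioc {t x : ℝ} (ht : 0 < t) (hx : 0 ≤ x) : exp (-t * x) ∈ Ioc 0 1 :=
  neg_mul t x ▸ exp_neg_mem_Ioc (by positivity)

lemma isTest_of_abs_le (hint : ∀ t > 0, IntegrableOn (fun x => exp (-t * x)) (Ici 0) ν)
    (hγ : 0 < γ) (hφ : Measurable φ) {C : ℝ} (hC : ∀ y ∈ Ioc 0 1, |φ y| ≤ C * y) :
    IsTest ν γ φ where
  integrableOn_laplace t ht := by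
    refine ((hint t ht).const_mul C).mono' (hφ.comp (by fun_prop)).aestronglyMeasurable ?_
    filter_upwards [ae_restrict_mem measurableSet_Ici] with x (hx : 0 ≤ x)
    exact hC _ (exp_neg_mul_mem_Ioc ht hx)
  integrableOn_gamma := by
    refine ((GammaIntegral_convergent hγ).const_mul C).mono'
      ((by fun_prop : Measurable fun u : ℝ => u ^ (γ - 1)).mul
        (hφ.comp (by fun_prop))).aestronglyMeasurable ?_
    filter_upwards [ae_restrict_mem measurableSet_Ioi] with u (hu : 0 < u)
    have hpow : 0 ≤ u ^ (γ - 1) := rpow_nonneg hu.le _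
    calc ‖u ^ (γ - 1) * φ (exp (-u))‖ = u ^ (γ - 1) * |φ (exp (-u))| := by
          rw [norm_mul, norm_of_nonneg hpow, norm_eq_abs]
      _ ≤ u ^ (γ - 1) * (C * exp (-u)) := by
          gcongr
          simpa using hC (exp (-u)) (exp_neg_mem_Ioc hu.le)
      _ = C * (exp (-u) * u ^ (γ - 1)) := by ring

lemma isTest_mul_continuous (hint : ∀ t > 0, IntegrableOn (fun x => exp (-t * x)) (Ici 0) ν)
    (hγ : 0 < γ) {h : ℝ → ℝ} (hh : Continuous h) : IsTest ν γ (fun y => y * h y) := by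
  obtain ⟨C, hC⟩ := (isCompact_Icc (a := (0 : ℝ)) (b := 1)).exists_bound_of_continuousOn
    hh.continuousOn
  refine isTest_of_abs_le hint hγ (by fun_prop) (C := C) fun y hy => ?_
  rw [abs_mul, abs_of_pos hy.1, mul_comm]
  exact mul_le_mul_of_nonneg_right (hC y (Ioc_subset_Icc_self hy)) hy.1.le

lemma gammaMoment_mono (hφ : IntegrableOn (fun u => u ^ (γ - 1) * φ (exp (-u))) (Ioi 0))
    (hψ : IntegrableOn (fun u => u ^ (γ - 1) * ψ (exp (-u))) (Ioi 0))
    (h : ∀ y ∈ Ioc 0 1, φ y ≤ ψ y) : gammaMoment γ φ ≤ gammaMoment γ ψ :=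
  setIntegral_mono_on hφ hψ measurableSet_Ioi fun u (hu : 0 < u) =>
    mul_le_mul_of_nonneg_left (h _ (exp_neg_mem_Ioc hu.le)) (rpow_nonneg hu.le _)

lemma gammaMoment_le_add_mul_Gamma (hγ : 0 < γ)
    (hφ : IntegrableOn (fun u => u ^ (γ - 1) * φ (exp (-u))) (Ioi 0))
    (hψ : IntegrableOn (fun u => u ^ (γ - 1) * ψ (exp (-u))) (Ioi 0))
    {ε : ℝ} (h : ∀ y ∈ Ioc 0 1, φ y ≤ ψ y + ε * y) :
    gammaMoment γ φ ≤ gammaMoment γ ψ + ε * Gamma γ := by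
  have hΓ := (GammaIntegral_convergent hγ).const_mul ε
  calc gammaMoment γ φ
      ≤ ∫ u in Ioi 0, u ^ (γ - 1) * ψ (exp (-u)) + ε * (exp (-u) * u ^ (γ - 1)) := by
        refine setIntegral_mono_on hφ (hψ.add hΓ) measurableSet_Ioi fun u (hu : 0 < u) => ?_
        have := mul_le_mul_of_nonneg_left (h _ (exp_neg_mem_Ioc hu.le)) (rpow_nonneg hu.le (γ - 1))
        linarith
    _ = gammaMoment γ ψ + ε * Gamma γ := by
        rw [integral_add hψ hΓ, integral_const_mul, ← Gamma_eq_integral hγ, gammaMoment]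

lemma gammaMoment_pow_succ (hγ : 0 < γ) (k : ℕ) :
    gammaMoment γ (fun y => y ^ (k + 1)) = Gamma γ / ((k : ℝ) + 1) ^ γ := by
  have hk : (0 : ℝ) < k + 1 := by positivity
  have hexp : ∀ u : ℝ, exp (-u) ^ (k + 1) = exp (-((k + 1) * u)) := fun u => by
    rw [← exp_nat_mul]; push_cast; ring_nf
  simp only [gammaMoment, hexp, integral_rpow_mul_exp_neg_mul_Ioi hγ hk, one_div,
    inv_rpow hk.le, inv_mul_eq_div]

lemma HasLimit.add (hφ : IsTest ν γ φ) (hψ : IsTest ν γ ψ) (hφl : HasLimit ν γ D φ)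
    (hψl : HasLimit ν γ D ψ) : HasLimit ν γ D (fun y => φ y + ψ y) := by
  unfold HasLimit gammaMoment at *
  simp only [mul_add]
  rw [integral_add hφ.integrableOn_gamma hψ.integrableOn_gamma, mul_add]
  refine (hφl.add hψl).congr' (eventually_nhdsWithin_of_forall fun t (ht : 0 < t) => ?_)
  dsimp only
  rw [integral_add (hφ.integrableOn_laplace t ht) (hψ.integrableOn_laplace t ht), mul_add]

lemma HasLimit.const_mul (c : ℝ) (hφl : HasLimit ν γ D φ) :
    HasLimit ν γ D (fun y => c * φ y) := by
  unfold HasLimit gammaMoment at *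
  simp only [mul_left_comm _ c, integral_const_mul]
  exact hφl.const_mul c

lemma hasLimit_pow_succ (hγ : 0 < γ)
    (hlap : Tendsto (fun t => t ^ γ * ∫ x in Ici 0, exp (-t * x) ∂ν) (𝓝[>] 0) (𝓝 D)) (k : ℕ) :
    HasLimit ν γ D (fun y => y ^ (k + 1)) := by
  set c : ℝ := k + 1 with hc_def
  have hc : 0 < c := by positivity
  have hscale : Tendsto (c * ·) (𝓝[>] 0) (𝓝[>] 0) :=
    tendsto_iff_comap.2 (comap_mulLeft_nhdsGT_zero hc).ge
  have hlim := (hlap.comp hscale).div_const (c ^ γ)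
  rw [HasLimit, gammaMoment_pow_succ hγ, div_mul_div_cancel₀ (Gamma_pos_of_pos hγ).ne']
  refine hlim.congr' (eventually_nhdsWithin_of_forall fun t (ht : 0 < t) => ?_)
  have hexp : ∀ x, exp (-t * x) ^ (k + 1) = exp (-(c * t) * x) := fun x => by
    rw [← exp_nat_mul, hc_def]; push_cast; ring_nf
  simp only [Function.comp_apply, hexp, mul_rpow hc.le ht.le]
  field_simp

lemma hasLimit_mul_eval (hint : ∀ t > 0, IntegrableOn (fun x => exp (-t * x)) (Ici 0) ν)
    (hγ : 0 < γ)
    (hlap : Tendsto (fun t => t ^ γ * ∫ x in Ici 0, exp (-t * x) ∂ν) (𝓝[>] 0) (𝓝 D))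
    (p : Polynomial ℝ) : HasLimit ν γ D (fun y => y * p.eval y) := by
  induction p using Polynomial.induction_on' with
  | add p q hp hq =>
    simpa only [Polynomial.eval_add, mul_add] using
      HasLimit.add (isTest_mul_continuous hint hγ p.continuous)
        (isTest_mul_continuous hint hγ q.continuous) hp hq
  | monomial n a =>
    have hmon : (fun y => y * (Polynomial.monomial n a).eval y) = fun y => a * y ^ (n + 1) := by
      ext y; rw [Polynomial.eval_monomial]; ring
    exact hmon ▸ (hasLimit_pow_succ hγ hlap n).const_mul a

lemma HasLimit.of_sandwich (hD : 0 ≤ D) (hγ : 0 < γ) (hφ : IsTest ν γ φ)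
    (hlower : ∀ ε > 0, ∃ ψ, IsTest ν γ ψ ∧ HasLimit ν γ D ψ ∧ (∀ y ∈ Ioc 0 1, ψ y ≤ φ y) ∧
      gammaMoment γ φ ≤ gammaMoment γ ψ + ε)
    (hupper : ∀ ε > 0, ∃ ψ, IsTest ν γ ψ ∧ HasLimit ν γ D ψ ∧ (∀ y ∈ Ioc 0 1, φ y ≤ ψ y) ∧
      gammaMoment γ ψ ≤ gammaMoment γ φ + ε) :
    HasLimit ν γ D φ := by
  set K := D / Gamma γ
  have hK : 0 ≤ K := div_nonneg hD (Gamma_pos_of_pos hγ).le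
  have hmono : ∀ {ψ₁ ψ₂ : ℝ → ℝ}, IsTest ν γ ψ₁ → IsTest ν γ ψ₂ → (∀ y ∈ Ioc 0 1, ψ₁ y ≤ ψ₂ y) →
      ∀ t > 0, t ^ γ * ∫ x in Ici 0, ψ₁ (exp (-t * x)) ∂ν
        ≤ t ^ γ * ∫ x in Ici 0, ψ₂ (exp (-t * x)) ∂ν := fun h₁ h₂ h t ht =>
    mul_le_mul_of_nonneg_left (setIntegral_mono_on (h₁.integrableOn_laplace t ht)
      (h₂.integrableOn_laplace t ht) measurableSet_Ici fun x hx => h _ (exp_neg_mul_mem_Ioc ht hx))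
      (rpow_nonneg ht.le γ)
  rw [HasLimit, tendsto_order]
  constructor
  · intro b hb
    obtain ⟨ε, hbε, hε⟩ : ∃ ε, b < K * (gammaMoment γ φ - ε) ∧ 0 < ε :=
      ((((continuous_const.mul (continuous_const.sub continuous_id)).tendsto' 0 _
        (by simp)).eventually (lt_mem_nhds hb)).filter_mono nhdsWithin_le_nhds |>.and
          (self_mem_nhdsWithin (s := Ioi 0))).exists
    obtain ⟨ψ, hψ, hψl, hψφ, hφψ⟩ := hlower ε hε
    filter_upwards [hψl.eventually (lt_mem_nhds (hbε.trans_le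
      (mul_le_mul_of_nonneg_left (by linarith) hK))), self_mem_nhdsWithin] with t hbt ht
    exact hbt.trans_le (hmono hψ hφ hψφ t ht)
  · intro b hb
    obtain ⟨ε, hbε, hε⟩ : ∃ ε, K * (gammaMoment γ φ + ε) < b ∧ 0 < ε :=
      ((((continuous_const.mul (continuous_const.add continuous_id)).tendsto' 0 _
        (by simp)).eventually (gt_mem_nhds hb)).filter_mono nhdsWithin_le_nhds |>.and
          (self_mem_nhdsWithin (s := Ioi 0))).exists
    obtain ⟨ψ, hψ, hψl, hφψ, hψφ⟩ := hupper ε hε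
    filter_upwards [hψl.eventually (gt_mem_nhds ((mul_le_mul_of_nonneg_left
      (by linarith) hK).trans_lt hbε)), self_mem_nhdsWithin] with t hbt ht
    exact (hmono hφ hψ hφψ t ht).trans_lt hbt

lemma hasLimit_mul_continuous (hint : ∀ t > 0, IntegrableOn (fun x => exp (-t * x)) (Ici 0) ν)
    (hD : 0 ≤ D) (hγ : 0 < γ)
    (hlap : Tendsto (fun t => t ^ γ * ∫ x in Ici 0, exp (-t * x) ∂ν) (𝓝[>] 0) (𝓝 D))
    {h : ℝ → ℝ} (hh : Continuous h) : HasLimit ν γ D (fun y => y * h y) := by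
  have hφ := isTest_mul_continuous hint hγ hh
  have hpoly (p : Polynomial ℝ) := isTest_mul_continuous hint hγ (ν := ν) p.continuous
  have happrox (ε : ℝ) (hε : 0 < ε) :
      ∃ p : Polynomial ℝ, ∀ y ∈ Ioc 0 1, |p.eval y - h y| < ε / (2 * Gamma γ) :=
    (exists_polynomial_near_of_continuousOn 0 1 h hh.continuousOn _ (by positivity)).imp
      fun p hp y hy => hp y (Ioc_subset_Icc_self hy)
  have hδ (ε : ℝ) : 2 * (ε / (2 * Gamma γ)) * Gamma γ = ε := by field_simp
  refine HasLimit.of_sandwich hD hγ hφ (fun ε hε => ?_) (fun ε hε => ?_)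
  · obtain ⟨p, hp⟩ := happrox ε hε
    set δ := ε / (2 * Gamma γ)
    refine ⟨fun y => y * (p - Polynomial.C δ).eval y, hpoly _, hasLimit_mul_eval hint hγ hlap _,
      fun y hy => ?_, ?_⟩
    · simp only [Polynomial.eval_sub, Polynomial.eval_C]
      exact mul_le_mul_of_nonneg_left (by linarith [abs_lt.1 (hp y hy)]) hy.1.le
    · refine hδ ε ▸ gammaMoment_le_add_mul_Gamma hγ hφ.integrableOn_gamma
        (hpoly _).integrableOn_gamma fun y hy => ?_
      simp only [Polynomial.eval_sub, Polynomial.eval_C]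
      have := mul_le_mul_of_nonneg_left (by linarith [abs_lt.1 (hp y hy)] : h y ≤ p.eval y + δ)
        hy.1.le
      linarith
  · obtain ⟨p, hp⟩ := happrox ε hε
    set δ := ε / (2 * Gamma γ)
    refine ⟨fun y => y * (p + Polynomial.C δ).eval y, hpoly _, hasLimit_mul_eval hint hγ hlap _,
      fun y hy => ?_, ?_⟩
    · simp only [Polynomial.eval_add, Polynomial.eval_C]
      exact mul_le_mul_of_nonneg_left (by linarith [abs_lt.1 (hp y hy)]) hy.1.le
    · refine hδ ε ▸ gammaMoment_le_add_mul_Gamma hγ (hpoly _).integrableOn_gamma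
        hφ.integrableOn_gamma fun y hy => ?_
      simp only [Polynomial.eval_add, Polynomial.eval_C]
      have := mul_le_mul_of_nonneg_left (by linarith [abs_lt.1 (hp y hy)] : p.eval y - δ ≤ h y)
        hy.1.le
      linarith

lemma mul_div_max_eq {a : ℝ} (ha : 0 < a) (h0 : ∀ y ≤ a, ψ y = 0) (y : ℝ) :
    y * (ψ y / max y a) = ψ y := by
  rcases le_or_gt y a with hy | hy
  · simp [h0 y hy]
  · rw [max_eq_left hy.le, mul_div_cancel₀ _ (ha.trans hy).ne']

lemma continuous_div_max {a : ℝ} (ha : 0 < a) (hψ : Continuous ψ) :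
    Continuous fun y => ψ y / max y a :=
  hψ.div (by fun_prop) fun y => (ha.trans_le (le_max_right y a)).ne'

lemma isTest_of_continuous_of_eq_zero
    (hint : ∀ t > 0, IntegrableOn (fun x => exp (-t * x)) (Ici 0) ν) (hγ : 0 < γ)
    (hψ : Continuous ψ) {a : ℝ} (ha : 0 < a) (h0 : ∀ y ≤ a, ψ y = 0) : IsTest ν γ ψ :=
  funext (mul_div_max_eq ha h0) ▸ isTest_mul_continuous hint hγ (continuous_div_max ha hψ)

lemma hasLimit_of_continuous_of_eq_zero
    (hint : ∀ t > 0, IntegrableOn (fun x => exp (-t * x)) (Ici 0) ν) (hD : 0 ≤ D) (hγ : 0 < γ)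
    (hlap : Tendsto (fun t => t ^ γ * ∫ x in Ici 0, exp (-t * x) ∂ν) (𝓝[>] 0) (𝓝 D))
    (hψ : Continuous ψ) {a : ℝ} (ha : 0 < a) (h0 : ∀ y ≤ a, ψ y = 0) : HasLimit ν γ D ψ :=
  funext (mul_div_max_eq ha h0) ▸
    hasLimit_mul_continuous hint hD hγ hlap (continuous_div_max ha hψ)

noncomputable def ramp (a b y : ℝ) : ℝ := max 0 (min 1 ((y - a) / (b - a)))

lemma continuous_ramp (a b : ℝ) : Continuous (ramp a b) := by
  unfold ramp; fun_prop

lemma ramp_le_indicator_Ioi {a b : ℝ} (hab : a < b) (y : ℝ) :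
    ramp a b y ≤ (Ioi a).indicator 1 y := by
  simp only [indicator_apply, mem_Ioi, Pi.one_apply]
  split_ifs with hy
  · exact max_le zero_le_one (min_le_left _ _)
  · exact max_le le_rfl ((min_le_right _ _).trans
      (div_nonpos_of_nonpos_of_nonneg (by linarith [not_lt.1 hy]) (by linarith)))

lemma indicator_Ioi_le_ramp {a b : ℝ} (hab : a < b) (y : ℝ) :
    (Ioi b).indicator 1 y ≤ ramp a b y := by
  simp only [indicator_apply, mem_Ioi, Pi.one_apply]
  split_ifs with hy
  · exact le_max_of_le_right (le_min le_rfl ((one_le_div (by linarith)).2 (by linarith)))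
  · exact le_max_left _ _

lemma ramp_eq_zero {a b y : ℝ} (hab : a < b) (hy : y ≤ a) : ramp a b y = 0 :=
  le_antisymm ((ramp_le_indicator_Ioi hab y).trans_eq (indicator_of_notMem (not_lt.2 hy) _))
    (le_max_left _ _)

lemma isTest_indicator_Ioi (hint : ∀ t > 0, IntegrableOn (fun x => exp (-t * x)) (Ici 0) ν)
    (hγ : 0 < γ) {a : ℝ} (ha : 0 < a) : IsTest ν γ ((Ioi a).indicator 1) := by
  refine isTest_of_abs_le hint hγ (measurable_one.indicator measurableSet_Ioi) (C := a⁻¹)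
    fun y hy => ?_
  simp only [indicator_apply, mem_Ioi, Pi.one_apply]
  split_ifs with h
  · rw [abs_one, inv_mul_eq_div, one_le_div ha]
    exact h.le
  · rw [abs_zero]
    exact mul_nonneg (inv_nonneg.2 ha.le) hy.1.le

lemma gammaMoment_indicator_Ioi_exp_neg (hγ : 0 < γ) {s : ℝ} (hs : 0 < s) :
    gammaMoment γ ((Ioi (exp (-s))).indicator 1) = s ^ γ / γ := by
  have hind (u : ℝ) : u ^ (γ - 1) * (Ioi (exp (-s))).indicator 1 (exp (-u))
      = (Iio s).indicator (fun u => u ^ (γ - 1)) u := by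
    simp only [indicator_apply, mem_Ioi, mem_Iio, exp_lt_exp, neg_lt_neg_iff]
    split_ifs <;> simp
  simp only [gammaMoment, hind]
  rw [setIntegral_indicator measurableSet_Iio, Ioi_inter_Iio, ← integral_Ioc_eq_integral_Ioo,
    ← intervalIntegral.integral_of_le hs.le, integral_rpow (Or.inl (by linarith)),
    sub_add_cancel, zero_rpow hγ.ne', sub_zero]

lemma integral_indicator_Ioi_exp_neg {t : ℝ} (ht : 0 < t) (s : ℝ) :
    ∫ x in Ici 0, (Ioi (exp (-s))).indicator 1 (exp (-t * x)) ∂ν = ν.real (Ico 0 (s / t)) := by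
  have hind (x : ℝ) : (Ioi (exp (-s))).indicator (1 : ℝ → ℝ) (exp (-t * x))
      = (Iio (s / t)).indicator 1 x := by
    simp only [indicator_apply, mem_Ioi, mem_Iio, exp_lt_exp, neg_mul, neg_lt_neg_iff,
      lt_div_iff₀ ht, mul_comm x, Pi.one_apply]
  simp only [hind]
  rw [integral_indicator_one measurableSet_Iio, measureReal_restrict_apply measurableSet_Iio,
    Iio_inter_Ici]

lemma hasLimit_indicator_Ioi_exp_neg
    (hint : ∀ t > 0, IntegrableOn (fun x => exp (-t * x)) (Ici 0) ν) (hD : 0 ≤ D) (hγ : 0 < γ)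
    (hlap : Tendsto (fun t => t ^ γ * ∫ x in Ici 0, exp (-t * x) ∂ν) (𝓝[>] 0) (𝓝 D))
    {s : ℝ} (hs : 0 < s) : HasLimit ν γ D ((Ioi (exp (-s))).indicator 1) := by
  have hramp {a b : ℝ} (ha : 0 < a) (hab : a < b) :
      IsTest ν γ (ramp a b) ∧ HasLimit ν γ D (ramp a b) :=
    ⟨isTest_of_continuous_of_eq_zero hint hγ (continuous_ramp a b) ha fun _ => ramp_eq_zero hab,
      hasLimit_of_continuous_of_eq_zero hint hD hγ hlap (continuous_ramp a b) ha
        fun _ => ramp_eq_zero hab⟩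
  have hind {a : ℝ} (ha : 0 < a) := (isTest_indicator_Ioi hint hγ ha).integrableOn_gamma
  have hpow : Continuous fun x : ℝ => x ^ γ / γ := (continuous_rpow_const hγ.le).div_const γ
  refine HasLimit.of_sandwich hD hγ (isTest_indicator_Ioi hint hγ (exp_pos _))
    (fun ε hε => ?_) (fun ε hε => ?_)
  · obtain ⟨δ, hδε, hδ, hδs⟩ : ∃ δ, s ^ γ / γ - ε < (s - δ) ^ γ / γ ∧ 0 < δ ∧ δ < s :=
      ((((hpow.comp (continuous_sub_left s)).tendsto' 0 _ (by simp)).eventually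
        (lt_mem_nhds (sub_lt_self _ hε))).filter_mono nhdsWithin_le_nhds |>.and
          (Ioo_mem_nhdsGT hs)).exists
    have hab : exp (-s) < exp (-(s - δ)) := exp_lt_exp.2 (by linarith)
    obtain ⟨hψ, hψl⟩ := hramp (exp_pos _) hab
    refine ⟨_, hψ, hψl, fun y _ => ramp_le_indicator_Ioi hab y, ?_⟩
    have := gammaMoment_mono (hind (exp_pos _)) hψ.integrableOn_gamma
      fun y _ => indicator_Ioi_le_ramp hab y
    rw [gammaMoment_indicator_Ioi_exp_neg hγ (by linarith)] at this
    rw [gammaMoment_indicator_Ioi_exp_neg hγ hs]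
    linarith
  · obtain ⟨δ, hδε, hδ⟩ : ∃ δ, (s + δ) ^ γ / γ < s ^ γ / γ + ε ∧ 0 < δ :=
      ((((hpow.comp (continuous_const_add s)).tendsto' 0 _ (by simp)).eventually
        (gt_mem_nhds (lt_add_of_pos_right _ hε))).filter_mono nhdsWithin_le_nhds |>.and
          (self_mem_nhdsWithin : Ioi (0 : ℝ) ∈ 𝓝[>] 0)).exists
    have hab : exp (-(s + δ)) < exp (-s) := exp_lt_exp.2 (by linarith)
    obtain ⟨hψ, hψl⟩ := hramp (exp_pos _) hab
    refine ⟨_, hψ, hψl, fun y _ => indicator_Ioi_le_ramp hab y, ?_⟩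
    have := gammaMoment_mono hψ.integrableOn_gamma (hind (exp_pos _))
      fun y _ => ramp_le_indicator_Ioi hab y
    rw [gammaMoment_indicator_Ioi_exp_neg hγ (by linarith)] at this
    rw [gammaMoment_indicator_Ioi_exp_neg hγ hs]
    linarith

lemma tendsto_rpow_mul_measureReal_Ico
    (hint : ∀ t > 0, IntegrableOn (fun x => exp (-t * x)) (Ici 0) ν) (hD : 0 ≤ D) (hγ : 0 < γ)
    (hlap : Tendsto (fun t => t ^ γ * ∫ x in Ici 0, exp (-t * x) ∂ν) (𝓝[>] 0) (𝓝 D))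
    {s : ℝ} (hs : 0 < s) :
    Tendsto (fun t => t ^ γ * ν.real (Ico 0 (s / t))) (𝓝[>] 0)
      (𝓝 (D * s ^ γ / Gamma (γ + 1))) := by
  have hlim := hasLimit_indicator_Ioi_exp_neg hint hD hγ hlap hs
  rw [HasLimit, gammaMoment_indicator_Ioi_exp_neg hγ hs,
    show D / Gamma γ * (s ^ γ / γ) = D * s ^ γ / Gamma (γ + 1) by
      rw [Gamma_add_one hγ.ne']; field_simp] at hlim
  exact hlim.congr' (eventually_nhdsWithin_of_forall fun t ht => by
    rw [integral_indicator_Ioi_exp_neg ht])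

lemma measure_Ico_lt_top {t : ℝ} (ht : 0 ≤ t)
    (hint : IntegrableOn (fun x => exp (-t * x)) (Ici 0) ν) (a : ℝ) : ν (Ico 0 a) < ⊤ := by
  refine lt_of_le_of_lt ?_ (hint.measure_ge_lt_top (exp_pos (-t * a)))
  calc ν (Ico 0 a) = ν.restrict (Ici 0) (Ico 0 a) := by
        rw [Measure.restrict_apply measurableSet_Ico, inter_eq_left.2 Ico_subset_Ici_self]
    _ ≤ _ := measure_mono fun x hx => exp_le_exp.2 (by nlinarith [hx.2])

end Karamata

theorem karamata_tauberian_general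
    (ν : Measure ℝ)
    (γ D : ℝ) (hγ : 0 < γ) (hD : 0 ≤ D)
    (h : Tendsto (fun t : ℝ =>
        ENNReal.ofReal (t ^ γ) *
          ∫⁻ x in Set.Ici (0:ℝ), ENNReal.ofReal (Real.exp (-t * x)) ∂ν)
      (nhdsWithin 0 (Set.Ioi 0)) (nhds (ENNReal.ofReal D))) :
    Tendsto (fun a : ℝ => ν (Set.Ico 0 a) / ENNReal.ofReal (a ^ γ)) atTop
      (nhds (ENNReal.ofReal (D / Real.Gamma (γ + 1)))) := by
  have hint (t : ℝ) (ht : 0 < t) :=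
    Karamata.integrableOn_exp_neg_mul (Karamata.lintegral_exp_neg_mul_lt_top h ht)
  have hlim := Karamata.tendsto_rpow_mul_measureReal_Ico hint hD hγ
    (Karamata.tendsto_rpow_mul_integral_exp_neg_mul hD h) one_pos
  rw [one_rpow, mul_one] at hlim
  refine (ENNReal.tendsto_ofReal (hlim.comp tendsto_inv_atTop_nhdsGT_zero)).congr' ?_
  filter_upwards [eventually_gt_atTop 0] with a ha
  rw [Function.comp_apply, one_div, inv_inv, inv_rpow ha.le, ← div_eq_inv_mul,
    ENNReal.ofReal_div_of_pos (rpow_pos_of_pos ha γ), measureReal_def,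
    ENNReal.ofReal_toReal (Karamata.measure_Ico_lt_top zero_le_one (hint 1 one_pos) a).ne]

/-- Karamata's Tauberian theorem: if `t^γ ∫_{[0,∞)} e^{-tx} dν(x) → D` as `t → 0⁺`
with `γ > 0`, then `ν([0,a))/a^γ → D/Γ(γ+1)` as `a → ∞`. -/
theorem karamata_tauberian
    (ν : Measure ℝ) [SigmaFinite ν] (hν : ν (Set.Iio 0) = 0)
    (γ D : ℝ) (hγ : 0 < γ) (hD : 0 ≤ D)
    (h : Tendsto (fun t : ℝ =>
        ENNReal.ofReal (t ^ γ) *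
          ∫⁻ x in Set.Ici (0:ℝ), ENNReal.ofReal (Real.exp (-t * x)) ∂ν)
      (nhdsWithin 0 (Set.Ioi 0)) (nhds (ENNReal.ofReal D))) :
    Tendsto (fun a : ℝ => ν (Set.Ico 0 a) / ENNReal.ofReal (a ^ γ)) atTop
      (nhds (ENNReal.ofReal (D / Real.Gamma (γ + 1)))) :=
  karamata_tauberian_general ν γ D hγ hD h
end

section
/- Let f_i : X → ℝ be continuous functions on a proper metric space X, uniformly bounded on bounded sets and locally equi-continuous, and let f : X → ℝ be continuous. Suppose that for every sequence y_i → y with y in the support of a Borel measure m, and measures m_i converging weakly to m in duality with continuous functions of bounded support, one has f_i(y_i) → f(y). Then for every ζ continuous with bounded support, ∫ ζ² f_i² dm_i → ∫ ζ² f² dm. -/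
open MeasureTheory Filter Set Metric Topology Function

/-!
Equicontinuity upgrades the convergence `f i y → f₀ y` at a point `y` of the support of `m` to
convergence of `f i x` as `(i, x) → (∞, y)`; by compactness of `supp m ∩ supp ζ`, the difference
`f i² - f₀²` is then eventually uniformly small, say `< η`, on a neighbourhood `U` of that set.
For a Urysohn cutoff `χ` equal to `1` on `supp m ∩ supp ζ` and to `0` off `U`, and a bound `C` for
`|f i² - f₀²|` on `supp ζ`, the integral `∫ ζ² (f i² - f₀²) dm_i` is bounded by
`∫ ζ² (η χ + C (1 - χ)) dm_i`, which tends to `η ∫ ζ² dm` since `m` does not charge the complement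
of its support. The remaining term `∫ ζ² f₀² dm_i` converges by weak convergence.
-/

theorem EquicontinuousAt.tendsto_uncurry {ι X α : Type*} [TopologicalSpace X]
    [PseudoMetricSpace α] {l : Filter ι} {F : ι → X → α} {y : X} {a : α}
    (hF : EquicontinuousAt F y) (hy : Tendsto (fun i => F i y) l (𝓝 a)) :
    Tendsto (uncurry F) (l ×ˢ 𝓝 y) (𝓝 a) := by
  refine Metric.tendsto_nhds.2 fun ε hε => ?_
  filter_upwards [(Metric.tendsto_nhds.1 hy _ (half_pos hε)).prod_mk
    (Metric.equicontinuousAt_iff_right.1 hF _ (half_pos hε))] with ⟨i, x⟩ ⟨hi, hx⟩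
  calc dist (F i x) a ≤ dist (F i y) (F i x) + dist (F i y) a := dist_triangle_left _ _ _
    _ < ε / 2 + ε / 2 := add_lt_add (hx i) hi
    _ = ε := add_halves ε

theorem Metric.equicontinuous_of_forall_closedBall {ι X α : Type*} [PseudoMetricSpace X]
    [PseudoMetricSpace α] {F : ι → X → α} (x₀ : X)
    (h : ∀ ε > 0, ∀ R > 0, ∃ δ > 0, ∀ i, ∀ y ∈ closedBall x₀ R, ∀ z ∈ closedBall x₀ R,
      dist y z < δ → dist (F i y) (F i z) < ε) :
    Equicontinuous F := by
  intro y
  refine Metric.equicontinuousAt_iff.2 fun ε hε => ?_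
  obtain ⟨δ, hδ, hF⟩ := h ε hε (dist y x₀ + 1) (by positivity)
  refine ⟨min δ 1, lt_min hδ one_pos, fun x hx i => hF i y ?_ x ?_ ?_⟩
  · exact mem_closedBall.2 (le_add_of_nonneg_right zero_le_one)
  · rw [mem_closedBall]
    linarith [dist_triangle x y x₀, (lt_min_iff.1 hx).2]
  · rw [dist_comm]
    exact (lt_min_iff.1 hx).1

theorem IsCompact.tendsto_prod_nhdsSet {ι X β : Type*} [TopologicalSpace X] {l : Filter ι}
    {lb : Filter β} {F : ι × X → β} {T : Set X} (hT : IsCompact T)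
    (h : ∀ y ∈ T, Tendsto F (l ×ˢ 𝓝 y) lb) : Tendsto F (l ×ˢ 𝓝ˢ T) lb := by
  rw [hT.prod_nhdsSet_eq_biSup]
  exact tendsto_iSup.2 fun y => tendsto_iSup.2 (h y)

theorem exists_forall_abs_le_of_isBounded {ι X : Type*} [PseudoMetricSpace X] {F : ι → X → ℝ}
    (x₀ : X) (h : ∀ R > 0, ∃ M : ℝ, ∀ i, ∀ y ∈ closedBall x₀ R, |F i y| ≤ M) {K : Set X}
    (hK : Bornology.IsBounded K) : ∃ M : ℝ, ∀ i, ∀ y ∈ K, |F i y| ≤ M := by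
  obtain ⟨r, hr⟩ := hK.subset_closedBall x₀
  obtain ⟨M, hM⟩ := h (max r 1) (by positivity)
  exact ⟨M, fun i y hy => hM i y (closedBall_subset_closedBall (le_max_left r 1) (hr hy))⟩

theorem tsupport_pow {X M₀ : Type*} [TopologicalSpace X] [MonoidWithZero M₀] [NoZeroDivisors M₀]
    (f : X → M₀) {n : ℕ} (hn : n ≠ 0) : tsupport (fun x => f x ^ n) = tsupport f := by
  simp only [tsupport, support_pow _ hn]

theorem abs_le_mul_add_mul_one_sub {t c η C : ℝ} (hc0 : 0 ≤ c) (hc1 : c ≤ 1) (htC : |t| ≤ C)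
    (htη : c ≠ 0 → |t| ≤ η) : |t| ≤ η * c + C * (1 - c) := by
  rcases eq_or_ne c 0 with hc | hc
  · simpa [hc] using htC
  · nlinarith [htη hc]

section WeakConvergence

variable {ι X : Type*} [TopologicalSpace X] [MeasurableSpace X]
  {l : Filter ι} {μ : ι → Measure X} {ν : Measure X}

theorem tendsto_zero_of_forall_abs_le_integral
    (hweak : ∀ g : X → ℝ, Continuous g → HasCompactSupport g →
      Tendsto (fun i => ∫ x, g x ∂μ i) l (𝓝 (∫ x, g x ∂ν)))
    {a : ι → ℝ} (h : ∀ ε > 0, ∃ w : X → ℝ, Continuous w ∧ HasCompactSupport w ∧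
      ∫ x, w x ∂ν < ε ∧ ∀ᶠ i in l, |a i| ≤ ∫ x, w x ∂μ i) :
    Tendsto a l (𝓝 0) := by
  refine Metric.tendsto_nhds.2 fun ε hε => ?_
  obtain ⟨w, hwc, hws, hwν, hw⟩ := h ε hε
  filter_upwards [hw, (hweak w hwc hws).eventually_lt_const hwν] with i hai hwi
  rw [Real.dist_0_eq_abs]
  exact hai.trans_lt hwi

variable [RegularSpace X] [LocallyCompactSpace X] [HereditarilyLindelofSpace X]
  [OpensMeasurableSpace X] [∀ i, IsFiniteMeasureOnCompacts (μ i)]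
  {ψ : X → ℝ} {C : ℝ}

theorem tendsto_integral_mul_of_tendsto_uncurry_zero
    (hweak : ∀ g : X → ℝ, Continuous g → HasCompactSupport g →
      Tendsto (fun i => ∫ x, g x ∂μ i) l (𝓝 (∫ x, g x ∂ν)))
    (hψc : Continuous ψ) (hψs : HasCompactSupport ψ) (hψ0 : ∀ x, 0 ≤ ψ x)
    {φ : ι → X → ℝ} (hC : ∀ i, ∀ x ∈ tsupport ψ, |φ i x| ≤ C)
    (hφ : ∀ y ∈ ν.support ∩ tsupport ψ, Tendsto (uncurry φ) (l ×ˢ 𝓝 y) (𝓝 0)) :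
    Tendsto (fun i => ∫ x, ψ x * φ i x ∂μ i) l (𝓝 0) := by
  refine tendsto_zero_of_forall_abs_le_integral hweak fun ε hε => ?_
  set T := ν.support ∩ tsupport ψ
  have hT : IsCompact T := hψs.inter_left Measure.isClosed_support
  set I := ∫ x, ψ x ∂ν
  have hI : 0 ≤ I := integral_nonneg hψ0
  set η := ε / (I + 1)
  have hη : 0 < η := by positivity
  have hηI : η * I < ε := by
    rw [div_mul_eq_mul_div, div_lt_iff₀ (by positivity)]
    nlinarith
  obtain ⟨N, hN, U, hU, hNU⟩ :=
    mem_prod_iff.1 (hT.tendsto_prod_nhdsSet hφ (ball_mem_nhds 0 hη))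
  obtain ⟨χ, hχT, hχU, -, hχ01⟩ := exists_continuous_one_zero_of_isCompact hT
    isOpen_interior.isClosed_compl
    (disjoint_compl_right_iff_subset.2 (subset_interior_iff_mem_nhdsSet.2 hU))
  set w : X → ℝ := fun x => ψ x * (η * χ x + C * (1 - χ x))
  have hw : ∀ i ∈ N, ∀ x, |ψ x * φ i x| ≤ w x := by
    intro i hi x
    by_cases hx : x ∈ tsupport ψ
    · rw [abs_mul, abs_of_nonneg (hψ0 x)]
      refine mul_le_mul_of_nonneg_left (abs_le_mul_add_mul_one_sub (hχ01 x).1 (hχ01 x).2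
        (hC i x hx) fun hχx => ?_) (hψ0 x)
      have hxU : x ∈ U := interior_subset (not_not.1 fun h => hχx (hχU h))
      have hsmall : (i, x) ∈ uncurry φ ⁻¹' ball 0 η := hNU (mk_mem_prod hi hxU)
      rw [mem_preimage, mem_ball, Real.dist_0_eq_abs] at hsmall
      exact hsmall.le
    · simp [w, image_eq_zero_of_notMem_tsupport hx]
  have hwν : ∫ x, w x ∂ν = η * I := by
    rw [← integral_const_mul]
    refine integral_congr_ae ?_
    filter_upwards [Measure.support_mem_ae] with x hx
    by_cases hxψ : x ∈ tsupport ψ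
    · simp [w, hχT ⟨hx, hxψ⟩, mul_comm]
    · simp [w, image_eq_zero_of_notMem_tsupport hxψ]
  have hwc : Continuous w := by fun_prop
  refine ⟨w, hwc, hψs.mul_right, hwν ▸ hηI, ?_⟩
  filter_upwards [hN] with i hi
  exact norm_integral_le_of_norm_le (hwc.integrable_of_hasCompactSupport hψs.mul_right)
    (ae_of_all _ fun x => (Real.norm_eq_abs _).trans_le (hw i hi x))

theorem tendsto_integral_mul_of_tendsto_uncurry
    (hweak : ∀ g : X → ℝ, Continuous g → HasCompactSupport g →
      Tendsto (fun i => ∫ x, g x ∂μ i) l (𝓝 (∫ x, g x ∂ν)))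
    (hψc : Continuous ψ) (hψs : HasCompactSupport ψ) (hψ0 : ∀ x, 0 ≤ ψ x)
    {g : ι → X → ℝ} {g₀ : X → ℝ} (hgc : ∀ i, Continuous (g i)) (hg₀c : Continuous g₀)
    (hC : ∀ i, ∀ x ∈ tsupport ψ, |g i x| ≤ C)
    (hg : ∀ y ∈ ν.support ∩ tsupport ψ, Tendsto (uncurry g) (l ×ˢ 𝓝 y) (𝓝 (g₀ y))) :
    Tendsto (fun i => ∫ x, ψ x * g i x ∂μ i) l (𝓝 (∫ x, ψ x * g₀ x ∂ν)) := by
  obtain ⟨N, hN⟩ := hψs.isCompact.exists_bound_of_continuousOn hg₀c.continuousOn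
  have hsmall := tendsto_integral_mul_of_tendsto_uncurry_zero hweak hψc hψs hψ0
    (φ := fun i x => g i x - g₀ x) (C := C + N)
    (fun i x hx => (abs_sub _ _).trans (add_le_add (hC i x hx) (hN x hx)))
    (fun y hy => by
      have := (hg y hy).sub ((hg₀c.tendsto y).comp tendsto_snd)
      rwa [sub_self] at this)
  have hint : ∀ h : X → ℝ, Continuous h → ∀ i, Integrable (fun x => ψ x * h x) (μ i) :=
    fun h hh i => (hψc.mul hh).integrable_of_hasCompactSupport hψs.mul_right
  have hsum := hsmall.add (hweak (fun x => ψ x * g₀ x) (hψc.mul hg₀c) hψs.mul_right)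
  rw [zero_add] at hsum
  refine hsum.congr fun i => ?_
  rw [← integral_add (hint (fun x => g i x - g₀ x) ((hgc i).sub hg₀c) i) (hint g₀ hg₀c i)]
  simp only [mul_sub, sub_add_cancel]

end WeakConvergence

theorem pointwise_to_L2_strong_convergence_general
    {X : Type*} [MetricSpace X] [ProperSpace X]
    [MeasurableSpace X] [BorelSpace X] (x₀ : X)
    (m' : ℕ → Measure X) (m : Measure X)
    [∀ i, IsLocallyFiniteMeasure (m' i)]
    (hweak : ∀ ζ : X → ℝ, Continuous ζ → HasCompactSupport ζ →
      Tendsto (fun i => ∫ x, ζ x ∂(m' i)) atTop (nhds (∫ x, ζ x ∂m)))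
    (f : ℕ → X → ℝ) (f₀ : X → ℝ)
    (hfc : ∀ i, Continuous (f i)) (hf₀c : Continuous f₀)
    (hbd : ∀ R > 0, ∃ M : ℝ, ∀ i, ∀ y ∈ Metric.closedBall x₀ R, |f i y| ≤ M)
    (hequi : ∀ ε > 0, ∀ R > 0, ∃ δ > 0, ∀ i, ∀ y ∈ Metric.closedBall x₀ R,
      ∀ z ∈ Metric.closedBall x₀ R, dist y z < δ → |f i y - f i z| < ε)
    (hpt : ∀ y : X, (∀ ε > 0, 0 < m (Metric.ball y ε)) →
      ∀ ys : ℕ → X, Tendsto ys atTop (nhds y) →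
        Tendsto (fun i => f i (ys i)) atTop (nhds (f₀ y))) :
    ∀ ζ : X → ℝ, Continuous ζ → HasCompactSupport ζ →
      Tendsto (fun i => ∫ x, (ζ x) ^ 2 * (f i x) ^ 2 ∂(m' i)) atTop
        (nhds (∫ x, (ζ x) ^ 2 * (f₀ x) ^ 2 ∂m)) := by
  intro ζ hζc hζs
  have hζ2s : HasCompactSupport fun x => ζ x ^ 2 := by
    rw [HasCompactSupport, tsupport_pow _ two_ne_zero]
    exact hζs
  obtain ⟨M, hM⟩ := exists_forall_abs_le_of_isBounded x₀ hbd hζs.isBounded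
  have hf : Equicontinuous f :=
    Metric.equicontinuous_of_forall_closedBall x₀ (by simpa only [Real.dist_eq] using hequi)
  refine tendsto_integral_mul_of_tendsto_uncurry hweak (ψ := fun x => ζ x ^ 2) (hζc.pow 2) hζ2s
    (fun x => sq_nonneg _) (g := fun i x => f i x ^ 2) (fun i => (hfc i).pow 2) (hf₀c.pow 2)
    (C := M ^ 2) (fun i x hx => ?_) (fun y hy => ?_)
  · rw [tsupport_pow _ two_ne_zero] at hx
    rw [abs_pow]
    exact pow_le_pow_left₀ (abs_nonneg _) (hM i x hx) 2
  · have hball : ∀ ε > 0, 0 < m (ball y ε) := fun ε hε =>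
      (Measure.mem_support_iff_forall y).1 hy.1 _ (ball_mem_nhds y hε)
    exact ((hf y).tendsto_uncurry (hpt y hball _ tendsto_const_nhds)).pow 2

/-- Proposition 3.2, (1) ⇒ (3): for equi-bounded, locally equi-continuous continuous
functions `f i` on a proper metric space with measures `m i ⇀ m` in duality with
continuous functions of bounded support, pointwise convergence along converging
sequences towards points of the support of `m` implies `L²`-strong convergence:
`∫ ζ² (f i)² dm_i → ∫ ζ² f² dm` for every `ζ` continuous with bounded support. -/
theorem pointwise_to_L2_strong_convergence
    {X : Type*} [MetricSpace X] [ProperSpace X]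
    [MeasurableSpace X] [BorelSpace X] (x₀ : X)
    (m' : ℕ → Measure X) (m : Measure X)
    [∀ i, IsLocallyFiniteMeasure (m' i)] [IsLocallyFiniteMeasure m]
    (hweak : ∀ ζ : X → ℝ, Continuous ζ → HasCompactSupport ζ →
      Tendsto (fun i => ∫ x, ζ x ∂(m' i)) atTop (nhds (∫ x, ζ x ∂m)))
    (f : ℕ → X → ℝ) (f₀ : X → ℝ)
    (hfc : ∀ i, Continuous (f i)) (hf₀c : Continuous f₀)
    (hbd : ∀ R > 0, ∃ M : ℝ, ∀ i, ∀ y ∈ Metric.closedBall x₀ R, |f i y| ≤ M)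
    (hequi : ∀ ε > 0, ∀ R > 0, ∃ δ > 0, ∀ i, ∀ y ∈ Metric.closedBall x₀ R,
      ∀ z ∈ Metric.closedBall x₀ R, dist y z < δ → |f i y - f i z| < ε)
    (hpt : ∀ y : X, (∀ ε > 0, 0 < m (Metric.ball y ε)) →
      ∀ ys : ℕ → X, Tendsto ys atTop (nhds y) →
        Tendsto (fun i => f i (ys i)) atTop (nhds (f₀ y))) :
    ∀ ζ : X → ℝ, Continuous ζ → HasCompactSupport ζ →
      Tendsto (fun i => ∫ x, (ζ x) ^ 2 * (f i x) ^ 2 ∂(m' i)) atTop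
        (nhds (∫ x, (ζ x) ^ 2 * (f₀ x) ^ 2 ∂m)) :=
  pointwise_to_L2_strong_convergence_general x₀ m' m hweak f f₀ hfc hf₀c hbd hequi hpt
end
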